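/- arXiv:1605.04352 — 11 statements merged into one kernel-verified Lean document; each statement's English description precedes it below -/
import Mathlib

section
/- For all n ∈ ℕ and real x with 0 < x < 1, the infinite product satisfies x^{n+1}/(1−x) − x^{2n+3}/(1−x)² ≤ 1 − ∏_{i=n+1}^∞ (1−xⁱ) ≤ x^{n+1}/(1−x). -/
theorem tail_product_bounds (n : ℕ) (x : ℝ) (hx0 : 0 < x) (hx1 : x < 1) :
    x ^ (n + 1) / (1 - x) - x ^ (2 * n + 3) / (1 - x) ^ 2
      ≤ 1 - ∏' i : ℕ, (1 - x ^ (n + 1 + i))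
    ∧ 1 - ∏' i : ℕ, (1 - x ^ (n + 1 + i)) ≤ x ^ (n + 1) / (1 - x) := by
  have hx1' : (0:ℝ) < 1 - x := by linarith
  set a : ℕ → ℝ := fun i => x ^ (n + 1 + i) with ha_def
  set f : ℕ → ℝ := fun i => 1 - a i with hf_def
  have ha_pos : ∀ i, 0 < a i := fun i => pow_pos hx0 _
  have ha_lt : ∀ i, a i < 1 := fun i => pow_lt_one₀ hx0.le hx1 (by omega)
  have hf_pos : ∀ i, 0 < f i := fun i => by have := ha_lt i; simp only [hf_def]; linarith
  have hf_le1 : ∀ i, f i ≤ 1 := fun i => by have := ha_pos i; simp only [hf_def]; linarith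
  -- multipliability via antitone net
  have hanti : Antitone (fun s : Finset ℕ => ∏ i ∈ s, f i) := by
    intro s t hst
    have h1 : ∏ i ∈ t \ s, f i ≤ 1 :=
      Finset.prod_le_one (fun i _ => (hf_pos i).le) (fun i _ => hf_le1 i)
    have h2 : (0:ℝ) ≤ ∏ i ∈ s, f i := Finset.prod_nonneg fun i _ => (hf_pos i).le
    have h3 : (∏ i ∈ t \ s, f i) * ∏ i ∈ s, f i = ∏ i ∈ t, f i := Finset.prod_sdiff hst
    nlinarith
  have hbdd : BddBelow (Set.range fun s : Finset ℕ => ∏ i ∈ s, f i) := by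
    refine ⟨0, ?_⟩
    rintro y ⟨s, rfl⟩
    exact Finset.prod_nonneg fun i _ => (hf_pos i).le
  have hprod : HasProd f (⨅ s : Finset ℕ, ∏ i ∈ s, f i) :=
    tendsto_atTop_ciInf hanti hbdd
  have hPt : Filter.Tendsto (fun N => ∏ i ∈ Finset.range N, f i) Filter.atTop
      (nhds (∏' i, f i)) := hprod.multipliable.hasProd.tendsto_prod_nat
  -- geometric sums
  have hgeo : HasSum (fun i : ℕ => x ^ i) (1 - x)⁻¹ :=
    hasSum_geometric_of_lt_one hx0.le hx1
  have hS : HasSum a (x ^ (n + 1) * (1 - x)⁻¹) := by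
    have := hgeo.mul_left (x ^ (n + 1))
    refine this.congr_fun fun i => ?_
    simp [ha_def, pow_add]
  have hSt : Filter.Tendsto (fun N => ∑ i ∈ Finset.range N, a i) Filter.atTop
      (nhds (x ^ (n + 1) * (1 - x)⁻¹)) := hS.tendsto_sum_nat
  have hSnn : ∀ N, (0:ℝ) ≤ ∑ i ∈ Finset.range N, a i :=
    fun N => Finset.sum_nonneg fun i _ => (ha_pos i).le
  -- key induction
  have key : ∀ N, 1 - ∑ i ∈ Finset.range N, a i ≤ ∏ i ∈ Finset.range N, f i ∧
      ∏ i ∈ Finset.range N, f i ≤ 1 - ∑ i ∈ Finset.range N, a i +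
        ∑ k ∈ Finset.range N, (∑ i ∈ Finset.range k, a i) * a k := by
    intro N
    induction N with
    | zero => simp
    | succ N ih =>
      obtain ⟨h1, h2⟩ := ih
      rw [Finset.prod_range_succ, Finset.sum_range_succ,
        Finset.sum_range_succ (f := fun k => (∑ i ∈ Finset.range k, a i) * a k)]
      have h1a : (0:ℝ) ≤ 1 - a N := by have := ha_lt N; linarith
      have hCnn : (0:ℝ) ≤ ∑ k ∈ Finset.range N, (∑ i ∈ Finset.range k, a i) * a k :=
        Finset.sum_nonneg fun k _ => mul_nonneg (hSnn k) (ha_pos k).le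
      have hSN := hSnn N
      have haN := ha_pos N
      have hfN : f N = 1 - a N := rfl
      rw [hfN]
      constructor
      · nlinarith [mul_le_mul_of_nonneg_right h1 h1a]
      · nlinarith [mul_le_mul_of_nonneg_right h2 h1a]
  -- bound on C N
  have hx2 : (0:ℝ) < 1 - x ^ 2 := by nlinarith
  have hgeo2 : HasSum (fun i : ℕ => x ^ i - (x ^ 2) ^ i) ((1 - x)⁻¹ - (1 - x ^ 2)⁻¹) :=
    hgeo.sub (hasSum_geometric_of_lt_one (by positivity) (by nlinarith))
  have hCbound : ∀ N, ∑ k ∈ Finset.range N, (∑ i ∈ Finset.range k, a i) * a k ≤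
      x ^ (2 * n + 3) / (1 - x) ^ 2 := by
    intro N
    have hterm : ∀ k, (∑ i ∈ Finset.range k, a i) * a k =
        x ^ (2 * n + 2) / (1 - x) * (x ^ k - (x ^ 2) ^ k) := by
      intro k
      have hsum : ∑ i ∈ Finset.range k, a i = x ^ (n + 1) * ((x ^ k - 1) / (x - 1)) := by
        simp only [ha_def, pow_add, ← Finset.mul_sum]
        rw [geom_sum_eq (by linarith : x ≠ 1)]
      rw [hsum]
      simp only [ha_def]
      have hx1ne : x - 1 ≠ 0 := by linarith
      field_simp
      ring
    calc ∑ k ∈ Finset.range N, (∑ i ∈ Finset.range k, a i) * a k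
        = x ^ (2 * n + 2) / (1 - x) * ∑ k ∈ Finset.range N, (x ^ k - (x ^ 2) ^ k) := by
          rw [Finset.mul_sum]; exact Finset.sum_congr rfl fun k _ => hterm k
      _ ≤ x ^ (2 * n + 2) / (1 - x) * ((1 - x)⁻¹ - (1 - x ^ 2)⁻¹) := by
          refine mul_le_mul_of_nonneg_left ?_ (by positivity)
          exact sum_le_hasSum _ (fun i _ => by
            have : (x ^ 2) ^ i ≤ x ^ i := by
              rw [← pow_mul]
              exact pow_le_pow_of_le_one hx0.le hx1.le (by omega)
            linarith) hgeo2
      _ ≤ x ^ (2 * n + 3) / (1 - x) ^ 2 := by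
          have h1 : (1 - x)⁻¹ - (1 - x ^ 2)⁻¹ = x / (1 - x ^ 2) := by
            field_simp; ring
          rw [h1]
          have h4 : x ^ (2 * n + 2) / (1 - x) * (x / (1 - x ^ 2)) =
              x ^ (2 * n + 3) / ((1 - x) * (1 - x ^ 2)) := by
            field_simp; ring
          rw [h4]
          exact div_le_div_of_nonneg_left (by positivity) (by positivity) (by nlinarith)
  -- take limits
  have hupper : 1 - x ^ (n + 1) * (1 - x)⁻¹ ≤ ∏' i, f i := by
    refine le_of_tendsto_of_tendsto' ((tendsto_const_nhds.sub hSt)) hPt fun N => (key N).1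
  have hlower : ∏' i, f i ≤ 1 - x ^ (n + 1) * (1 - x)⁻¹ + x ^ (2 * n + 3) / (1 - x) ^ 2 := by
    refine le_of_tendsto_of_tendsto' hPt
      ((tendsto_const_nhds.sub hSt).add tendsto_const_nhds) fun N => ?_
    exact (key N).2.trans (by have := hCbound N; linarith)
  have heq : x ^ (n + 1) * (1 - x)⁻¹ = x ^ (n + 1) / (1 - x) := by
    rw [div_eq_mul_inv]
  constructor
  · rw [← heq]; linarith
  · rw [← heq]; linarith
end

section
/- For all real x, y with |x| < 1, |y| < 1 and integers n ≥ m ≥ 0, one has ∏_{i=m}^n 1/(1−y·xⁱ) = ∑_{k≥0} y^k x^{mk} · (∏_{i=n−m+1}^{n−m+k} (1−xⁱ)) / (∏_{i=1}^k (1−xⁱ)). -/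
open Finset

/-! Write `[N + k choose k]_x` for the Gaussian binomial coefficient. The q-Pascal rule
`[N+k+2 choose k+1] = x^(k+1) [N+k+1 choose k+1] + [N+k+1 choose k]` telescopes to
`[N+1+n choose n] = ∑_{j ≤ n} x^j [N+j choose j]`, which is exactly the Cauchy-product
coefficient of `(1 - z)⁻¹ · ∏_{i ≤ N} (1 - (z x) x^i)⁻¹ = ∏_{i ≤ N+1} (1 - z x^i)⁻¹`.
Induction on `N` therefore gives `∏_{i ≤ N} (1 - z x^i)⁻¹ = ∑_k z^k [N+k choose k]_x` for
`‖x‖, ‖z‖ < 1`; the same sum formula bounds `[N+k choose k]_x` by `(1 - ‖x‖)⁻¹ ^ N`, which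
provides the absolute convergence the Cauchy product needs. The theorem is the case
`z = y x^m`, `N = n - m`. -/

/-- The Gaussian binomial coefficient `[N + k choose k]_x`. -/
noncomputable def qBinom {K : Type*} [Field K] (x : K) (N k : ℕ) : K :=
  (∏ i ∈ Icc (N + 1) (N + k), (1 - x ^ i)) / ∏ i ∈ Icc 1 k, (1 - x ^ i)

section Field

variable {K : Type*} [Field K] {x : K}

theorem qBinom_zero_right (N : ℕ) : qBinom x N 0 = 1 := by
  simp [qBinom]

theorem qBinom_succ (N k : ℕ) :
    qBinom x N (k + 1) = qBinom x N k * (1 - x ^ (N + k + 1)) / (1 - x ^ (k + 1)) := by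
  rw [qBinom, qBinom, ← add_assoc, prod_Icc_succ_top (by omega), prod_Icc_succ_top (by omega),
    div_mul_eq_mul_div, div_div]

theorem qBinom_succ' (N k : ℕ) :
    qBinom x N (k + 1) = (1 - x ^ (N + 1)) * qBinom x (N + 1) k / (1 - x ^ (k + 1)) := by
  rw [qBinom, qBinom, ← mul_prod_Ioc_eq_prod_Icc (by omega), ← Icc_add_one_left_eq_Ioc,
    prod_Icc_succ_top (by omega), add_right_comm N 1 k, ← add_assoc,
    mul_div_assoc', div_div]

theorem qBinom_zero_left (hx : ∀ i ≠ 0, x ^ i ≠ 1) (k : ℕ) : qBinom x 0 k = 1 := by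
  induction k with
  | zero => exact qBinom_zero_right 0
  | succ k ih =>
    rw [qBinom_succ, ih, one_mul, zero_add,
      div_self (sub_ne_zero.2 (hx _ k.succ_ne_zero).symm)]

theorem qBinom_succ_succ {k : ℕ} (hk : x ^ (k + 1) ≠ 1) (N : ℕ) :
    qBinom x (N + 1) (k + 1) = x ^ (k + 1) * qBinom x N (k + 1) + qBinom x (N + 1) k := by
  have hc : 1 - x ^ (k + 1) ≠ 0 := sub_ne_zero.2 hk.symm
  rw [qBinom_succ, qBinom_succ']
  field_simp
  ring

theorem qBinom_succ_eq_sum (hx : ∀ i ≠ 0, x ^ i ≠ 1) (N n : ℕ) :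
    qBinom x (N + 1) n = ∑ j ∈ range (n + 1), x ^ j * qBinom x N j := by
  induction n with
  | zero => simp [qBinom_zero_right]
  | succ n ih =>
    rw [qBinom_succ_succ (hx _ n.succ_ne_zero), sum_range_succ, ih, add_comm]

end Field

section NormedField

variable {𝕜 : Type*} [NormedField 𝕜] {x : 𝕜}

theorem pow_ne_one_of_norm_lt_one (hx : ‖x‖ < 1) {i : ℕ} (hi : i ≠ 0) : x ^ i ≠ 1 := by
  intro h
  have := pow_lt_one₀ (norm_nonneg x) hx hi
  rw [← norm_pow, h, norm_one] at this
  exact this.false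

theorem norm_qBinom_le (hx : ‖x‖ < 1) (N k : ℕ) : ‖qBinom x N k‖ ≤ (1 - ‖x‖)⁻¹ ^ N := by
  induction N generalizing k with
  | zero => simp [qBinom_zero_left fun i => pow_ne_one_of_norm_lt_one hx]
  | succ N ih =>
    have hgeom : ∑ j ∈ range (k + 1), ‖x‖ ^ j ≤ (1 - ‖x‖)⁻¹ := by
      simpa [← range_eq_Ico] using geom_sum_Ico_le_of_lt_one (m := 0) (norm_nonneg x) hx
    rw [qBinom_succ_eq_sum fun i => pow_ne_one_of_norm_lt_one hx, pow_succ']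
    calc ‖∑ j ∈ range (k + 1), x ^ j * qBinom x N j‖
        ≤ ∑ j ∈ range (k + 1), ‖x‖ ^ j * (1 - ‖x‖)⁻¹ ^ N :=
          norm_sum_le_of_le _ fun j _ => by rw [norm_mul, norm_pow]; gcongr; exact ih j
      _ ≤ (1 - ‖x‖)⁻¹ * (1 - ‖x‖)⁻¹ ^ N := by rw [← sum_mul]; gcongr

theorem summable_norm_pow_mul_qBinom (hx : ‖x‖ < 1) {z : 𝕜} (hz : ‖z‖ < 1) (N : ℕ) :
    Summable fun k => ‖z ^ k * qBinom x N k‖ :=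
  ((summable_geometric_of_lt_one (norm_nonneg z) hz).mul_right ((1 - ‖x‖)⁻¹ ^ N)).of_nonneg_of_le
    (fun _ => norm_nonneg _) fun k => by
      rw [norm_mul, norm_pow]; gcongr; exact norm_qBinom_le hx N k

theorem tsum_pow_mul_qBinom [CompleteSpace 𝕜] (hx : ‖x‖ < 1) (N : ℕ) {z : 𝕜} (hz : ‖z‖ < 1) :
    ∑' k, z ^ k * qBinom x N k = ∏ i ∈ range (N + 1), (1 - z * x ^ i)⁻¹ := by
  induction N generalizing z with
  | zero =>
    simp [qBinom_zero_left fun i => pow_ne_one_of_norm_lt_one hx, tsum_geometric_of_norm_lt_one hz]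
  | succ N ih =>
    have hzx : ‖z * x‖ < 1 := by
      rw [norm_mul]; exact mul_lt_one_of_nonneg_of_lt_one_left (norm_nonneg z) hz hx.le
    have hsplit : ∏ i ∈ range (N + 2), (1 - z * x ^ i)⁻¹
        = (∑' k, (z * x) ^ k * qBinom x N k) * ∑' k, z ^ k := by
      rw [prod_range_succ', ih hzx, tsum_geometric_of_norm_lt_one hz]
      simp only [pow_succ', pow_zero, mul_one, mul_assoc]
    rw [hsplit, tsum_mul_tsum_eq_tsum_sum_range_of_summable_norm
      (summable_norm_pow_mul_qBinom hx hzx N) (summable_norm_geometric_of_norm_lt_one hz)]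
    refine tsum_congr fun n => ?_
    rw [qBinom_succ_eq_sum (fun i => pow_ne_one_of_norm_lt_one hx), mul_sum]
    refine sum_congr rfl fun k hk => ?_
    rw [mul_pow, ← pow_mul_pow_sub z (mem_range_succ_iff.1 hk)]
    ring

end NormedField

theorem q_series_identity_general (x y : ℝ) (hx : |x| < 1) (hy : |y| < 1)
    (m n : ℕ) (hmn : m ≤ n) :
    ∏ i ∈ Finset.Icc m n, (1 - y * x ^ i)⁻¹
      = ∑' k : ℕ, y ^ k * x ^ (m * k)
          * (∏ i ∈ Finset.Icc (n - m + 1) (n - m + k), (1 - x ^ i))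
          / ∏ i ∈ Finset.Icc 1 k, (1 - x ^ i) := by
  have hz : ‖y * x ^ m‖ < 1 := by
    rw [norm_mul, norm_pow]
    exact mul_lt_one_of_nonneg_of_lt_one_left (norm_nonneg y) hy
      (pow_le_one₀ (norm_nonneg x) hx.le)
  have hreindex : ∏ i ∈ Icc m n, (1 - y * x ^ i)⁻¹
      = ∏ i ∈ range (n - m + 1), (1 - y * x ^ m * x ^ i)⁻¹ := by
    rw [← Ico_add_one_right_eq_Icc, prod_Ico_eq_prod_range, Nat.sub_add_comm hmn]
    simp only [pow_add, mul_assoc]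
  rw [hreindex, ← tsum_pow_mul_qBinom hx (n - m) hz]
  refine tsum_congr fun k => ?_
  rw [qBinom, mul_pow, pow_mul, mul_div_assoc]
end

section
/- Let 0 < x < 1 and let Z₁, Z₂, ... be independent random variables with P(Zᵢ ≥ k) = x^{ik} for all k ∈ ℕ (so Zᵢ is geometric with parameter 1−xⁱ). For integers n ≥ m > 0 and k ≥ 0, P(Z_m + Z_{m+1} + ... + Z_n = k) = x^{mk} · (∏_{i=n−m+1}^{n−m+k} (1−xⁱ)) · (∏_{i=m}^n (1−xⁱ)) / (∏_{i=1}^k (1−xⁱ)). -/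
open MeasureTheory ProbabilityTheory Finset

/-!
Conditioning on the last variable, `P(Z_m + ⋯ + Z_{n+1} = k)` is the convolution of the law of
`Z_m + ⋯ + Z_n` with the geometric law of `Z_{n+1}`. The claimed law is
`x^{mk} [n - m + k, k]_x ∏_{i=m}^n (1 - xⁱ)`, and after pulling out `x^{mk}` the convolution
reduces to the `x`-analogue `∑_{j ≤ k} x^{aj} [a + k - j - 1, k - j]_x = [a + k, k]_x` of the
hockey-stick identity, which follows by induction on `k` from the `x`-Pascal rule.
-/

theorem Finset.prod_Icc_add_one_add_eq_prod_range {M : Type*} [CommMonoid M] (f : ℕ → M)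
    (a k : ℕ) : ∏ i ∈ Icc (a + 1) (a + k), f i = ∏ i ∈ range k, f (a + 1 + i) := by
  rw [← Finset.Ico_add_one_right_eq_Icc, prod_Ico_eq_prod_range, Nat.add_sub_add_right,
    Nat.add_sub_cancel_left]

section QMultichoose

variable {K : Type*} [Field K]

/-- The Gaussian binomial coefficient `[n + k - 1, k]_x`, the `x`-analogue of
`Nat.multichoose n k`. -/
noncomputable def qMultichoose (x : K) (n k : ℕ) : K :=
  (∏ i ∈ range k, (1 - x ^ (n + i))) / ∏ i ∈ range k, (1 - x ^ (1 + i))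

variable {x : K} (hx : ∀ i, x ^ (i + 1) ≠ 1)
include hx

theorem prod_one_sub_pow_ne_zero (k : ℕ) : ∏ i ∈ range k, (1 - x ^ (1 + i)) ≠ 0 :=
  prod_ne_zero_iff.2 fun i _ ↦ sub_ne_zero.2 (by rw [add_comm]; exact (hx i).symm)

theorem qMultichoose_one (k : ℕ) : qMultichoose x 1 k = 1 :=
  div_self (prod_one_sub_pow_ne_zero hx k)

theorem qMultichoose_succ_succ (n k : ℕ) :
    qMultichoose x (n + 1) (k + 1)
      = qMultichoose x n (k + 1) + x ^ n * qMultichoose x (n + 1) k := by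
  have hD := prod_one_sub_pow_ne_zero hx k
  have hk : 1 - x ^ (1 + k) ≠ 0 := sub_ne_zero.2 (by rw [add_comm]; exact (hx k).symm)
  have hlow : ∏ i ∈ range (k + 1), (1 - x ^ (n + i))
      = (1 - x ^ n) * ∏ i ∈ range k, (1 - x ^ (n + 1 + i)) := by
    rw [prod_range_succ', add_zero, mul_comm]
    simp only [add_assoc, add_comm 1]
  have htop : x ^ (n + 1 + k) = x ^ n * x ^ (1 + k) := by rw [← pow_add, add_assoc]
  simp only [qMultichoose, hlow, prod_range_succ _ k, htop]
  field_simp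
  ring

theorem sum_antidiagonal_pow_mul_qMultichoose (n k : ℕ) :
    ∑ p ∈ antidiagonal k, x ^ (n * p.2) * qMultichoose x n p.1 = qMultichoose x (n + 1) k := by
  induction k with
  | zero => simp [qMultichoose]
  | succ k ih =>
    rw [Nat.sum_antidiagonal_succ', qMultichoose_succ_succ hx, ← ih, mul_sum]
    simp only [mul_zero, pow_zero, one_mul, mul_add_one, pow_add, mul_assoc, mul_left_comm (x ^ n)]

theorem sum_antidiagonal_pow_mul_qMultichoose_mul_pow (m a k : ℕ) :
    ∑ p ∈ antidiagonal k, x ^ (m * p.1) * qMultichoose x a p.1 * x ^ ((m + a) * p.2)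
      = x ^ (m * k) * qMultichoose x (a + 1) k := by
  rw [← sum_antidiagonal_pow_mul_qMultichoose hx, mul_sum]
  refine sum_congr rfl fun p hp ↦ ?_
  rw [← mem_antidiagonal.1 hp]
  ring

end QMultichoose

theorem qMultichoose_nonneg {x : ℝ} (hx0 : 0 ≤ x) (hx1 : x ≤ 1) (n k : ℕ) :
    0 ≤ qMultichoose x n k :=
  div_nonneg (prod_nonneg fun _ _ ↦ sub_nonneg.2 (pow_le_one₀ hx0 hx1))
    (prod_nonneg fun _ _ ↦ sub_nonneg.2 (pow_le_one₀ hx0 hx1))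

theorem ProbabilityTheory.IndepFun.measure_add_eq_sum_antidiagonal {Ω M : Type*}
    [MeasurableSpace Ω] {P : Measure Ω} [AddMonoid M] [HasAntidiagonal M] [MeasurableSpace M]
    [MeasurableSingletonClass M] {X Y : Ω → M} (hX : Measurable X) (hY : Measurable Y)
    (h : IndepFun X Y P) (k : M) :
    P {ω | X ω + Y ω = k} = ∑ p ∈ antidiagonal k, P {ω | X ω = p.1} * P {ω | Y ω = p.2} := by
  have hunion : {ω | X ω + Y ω = k}
      = ⋃ p ∈ antidiagonal k, X ⁻¹' {p.1} ∩ Y ⁻¹' {p.2} := by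
    ext ω
    simp
  rw [hunion, measure_biUnion_finset]
  · exact sum_congr rfl fun p _ ↦ h.measure_inter_preimage_eq_mul _ _
      (measurableSet_singleton _) (measurableSet_singleton _)
  · intro p _ q _ hpq
    refine Set.disjoint_left.2 fun ω hp hq ↦ hpq ?_
    simp only [Set.mem_inter_iff, Set.mem_preimage, Set.mem_singleton_iff] at hp hq
    exact Prod.ext (hp.1 ▸ hq.1) (hp.2 ▸ hq.2)
  · exact fun p _ ↦ (hX (measurableSet_singleton _)).inter (hY (measurableSet_singleton _))

theorem measure_eq_of_measure_le_eq_pow {Ω : Type*} [MeasurableSpace Ω] {P : Measure Ω}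
    [IsFiniteMeasure P] {X : Ω → ℕ} (hX : Measurable X) {r : ℝ} (hr : 0 ≤ r)
    (h : ∀ k, P {ω | k ≤ X ω} = ENNReal.ofReal (r ^ k)) (j : ℕ) :
    P {ω | X ω = j} = ENNReal.ofReal (r ^ j * (1 - r)) := by
  have hdiff : {ω | X ω = j} = {ω | j ≤ X ω} \ {ω | j + 1 ≤ X ω} := by
    ext ω
    simp only [Set.mem_ofPred_eq, Set.mem_sdiff]
    omega
  have hsub : {ω | j + 1 ≤ X ω} ⊆ {ω | j ≤ X ω} := fun ω h ↦ Nat.le_of_succ_le h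
  rw [hdiff, measure_sdiff hsub (hX measurableSet_Ici).nullMeasurableSet (measure_ne_top P _),
    h, h, ← ENNReal.ofReal_sub _ (by positivity), pow_succ, mul_one_sub]

theorem measure_sum_Icc_eq_of_geometric {Ω : Type*} [MeasurableSpace Ω] {P : Measure Ω}
    {x : ℝ} (hx0 : 0 ≤ x) (hx1 : x < 1) {Z : ℕ → Ω → ℕ} (hmeas : ∀ i, Measurable (Z i))
    (hindep : iIndepFun Z P) {m : ℕ}
    (hZ : ∀ i, m ≤ i → ∀ j, P {ω | Z i ω = j} = ENNReal.ofReal (x ^ (i * j) * (1 - x ^ i)))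
    {n : ℕ} (hmn : m ≤ n) (k : ℕ) :
    P {ω | ∑ i ∈ Icc m n, Z i ω = k}
      = ENNReal.ofReal
          (x ^ (m * k) * qMultichoose x (n - m + 1) k * ∏ i ∈ Icc m n, (1 - x ^ i)) := by
  have hx : ∀ i, x ^ (i + 1) ≠ 1 := fun i ↦ (pow_lt_one₀ hx0 hx1 i.succ_ne_zero).ne
  have hfactor_nonneg : ∀ i, 0 ≤ 1 - x ^ i := fun i ↦ sub_nonneg.2 (pow_le_one₀ hx0 hx1.le)
  induction n, hmn using Nat.le_induction generalizing k with
  | base => simp [hZ m le_rfl, qMultichoose_one hx]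
  | succ n hmn ih =>
    have hindep_succ : IndepFun (∑ i ∈ Icc m n, Z i) (Z (n + 1)) P :=
      hindep.indepFun_finsetSum_of_notMem hmeas (by simp)
    have hsplit : {ω | ∑ i ∈ Icc m (n + 1), Z i ω = k}
        = {ω | (∑ i ∈ Icc m n, Z i) ω + Z (n + 1) ω = k} := by
      simp only [sum_Icc_succ_top (hmn.trans n.le_succ), Finset.sum_apply]
    rw [hsplit, hindep_succ.measure_add_eq_sum_antidiagonal (by fun_prop) (hmeas _)]
    simp only [Finset.sum_apply, ih, hZ (n + 1) (hmn.trans n.le_succ)]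
    have hlaw_nonneg :
        ∀ j, 0 ≤ x ^ (m * j) * qMultichoose x (n - m + 1) j * ∏ i ∈ Icc m n, (1 - x ^ i) :=
      fun j ↦ mul_nonneg (mul_nonneg (pow_nonneg hx0 _) (qMultichoose_nonneg hx0 hx1.le _ _))
        (prod_nonneg fun i _ ↦ hfactor_nonneg i)
    simp only [← ENNReal.ofReal_mul (hlaw_nonneg _)]
    rw [← ENNReal.ofReal_sum_of_nonneg fun p _ ↦
      mul_nonneg (hlaw_nonneg _) (mul_nonneg (pow_nonneg hx0 _) (hfactor_nonneg _)),
      prod_Icc_succ_top (by omega), show n + 1 - m + 1 = n - m + 1 + 1 by omega,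
      ← sum_antidiagonal_pow_mul_qMultichoose_mul_pow hx, show m + (n - m + 1) = n + 1 by omega,
      sum_mul]
    congr 1
    refine sum_congr rfl fun p _ ↦ ?_
    ring

theorem geometric_sum_pmf {Ω : Type*} [MeasurableSpace Ω] (P : Measure Ω)
    [IsProbabilityMeasure P] (x : ℝ) (hx0 : 0 < x) (hx1 : x < 1)
    (Z : ℕ → Ω → ℕ) (hmeas : ∀ i, Measurable (Z i))
    (hindep : iIndepFun Z P)
    (hgeom : ∀ i, 1 ≤ i → ∀ k : ℕ, P {ω | k ≤ Z i ω} = ENNReal.ofReal (x ^ (i * k)))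
    (m n : ℕ) (hm : 0 < m) (hmn : m ≤ n) (k : ℕ) :
    P {ω | ∑ i ∈ Finset.Icc m n, Z i ω = k}
      = ENNReal.ofReal (x ^ (m * k)
          * (∏ i ∈ Finset.Icc (n - m + 1) (n - m + k), (1 - x ^ i))
          * (∏ i ∈ Finset.Icc m n, (1 - x ^ i))
          / ∏ i ∈ Finset.Icc 1 k, (1 - x ^ i)) := by
  have hpmf :
      ∀ i, m ≤ i → ∀ j, P {ω | Z i ω = j} = ENNReal.ofReal (x ^ (i * j) * (1 - x ^ i)) := by
    intro i hi j
    rw [pow_mul]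
    exact measure_eq_of_measure_le_eq_pow (hmeas i) (by positivity)
      (fun k ↦ by rw [hgeom i (hm.trans_le hi) k, pow_mul]) j
  have hdenom := prod_Icc_add_one_add_eq_prod_range (fun i ↦ 1 - x ^ i) 0 k
  simp only [zero_add] at hdenom
  rw [measure_sum_Icc_eq_of_geometric hx0.le hx1 hmeas hindep hpmf hmn, hdenom,
    prod_Icc_add_one_add_eq_prod_range, qMultichoose, mul_div_assoc', div_mul_eq_mul_div]
end

section
/- Let 0 < x < 1 and n ≥ 1, and let S_n = Z₁ + ... + Z_n be a sum of independent geometric random variables with P(Zᵢ ≥ k) = x^{ik}. Then the distribution of S_n is log-concave: for all k ≥ 0, P(S_n = k+1)² ≥ P(S_n = k) · P(S_n = k+2). -/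
/-!
If `Y` is independent of `X` with `P(Y = j) = (1 - y) yʲ`, the mass function of `X + Y` is
`(1 - y) c`, where `c = b ∗ (yʲ)` is the convolution of the mass function `b` of `X` with the
geometric sequence, i.e. `c (k+1) = y c k + b (k+1)`. For positive log-concave `b` this recursion
propagates the inequality `c k · b (k+2) ≤ c (k+1) · b (k+1)`, and that inequality is exactly what
makes `c` log-concave. As `S₁ = Z₁` is geometric and `S_{n+1} = S_n + Z_{n+1}` with `Z_{n+1}`
geometric of ratio `x^{n+1}`, induction on `n` gives the theorem.
-/

open MeasureTheory ProbabilityTheory Finset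

def IsLogConcaveSeq (a : ℕ → ℝ) : Prop :=
  ∀ k, a k * a (k + 2) ≤ a (k + 1) ^ 2

lemma IsLogConcaveSeq.const_mul {a : ℕ → ℝ} (ha : IsLogConcaveSeq a) (c : ℝ) :
    IsLogConcaveSeq (fun k ↦ c * a k) := fun k ↦ by
  nlinarith [mul_le_mul_of_nonneg_left (ha k) (sq_nonneg c)]

lemma isLogConcaveSeq_geometric (y c : ℝ) : IsLogConcaveSeq (fun k ↦ y ^ k * c) := fun k ↦
  le_of_eq (by ring)

def geomConv (r : ℝ) (b : ℕ → ℝ) : ℕ → ℝ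
  | 0 => b 0
  | k + 1 => r * geomConv r b k + b (k + 1)

lemma geomConv_eq_sum (r : ℝ) (b : ℕ → ℝ) (k : ℕ) :
    geomConv r b k = ∑ p ∈ antidiagonal k, b p.1 * r ^ p.2 := by
  induction k with
  | zero => simp [geomConv]
  | succ k ih =>
    rw [geomConv, ih, Nat.sum_antidiagonal_succ', mul_sum]
    simp only [pow_zero, mul_one, pow_succ]
    rw [add_comm]
    congr 1
    exact sum_congr rfl fun _ _ ↦ by ring

section geomConv

variable {r : ℝ} {b : ℕ → ℝ}

lemma geomConv_pos (hr : 0 ≤ r) (hb : ∀ k, 0 < b k) (k : ℕ) : 0 < geomConv r b k := by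
  induction k with
  | zero => exact hb 0
  | succ k ih => exact add_pos_of_nonneg_of_pos (mul_nonneg hr ih.le) (hb _)

lemma geomConv_mul_le (hr : 0 ≤ r) (hb : ∀ k, 0 < b k) (hlc : IsLogConcaveSeq b) (k : ℕ) :
    geomConv r b k * b (k + 2) ≤ geomConv r b (k + 1) * b (k + 1) := by
  induction k with
  | zero =>
    simp only [geomConv]
    nlinarith [hlc 0, mul_nonneg hr (mul_nonneg (hb 0).le (hb 1).le)]
  | succ k ih =>
    set c := geomConv r b
    have hc : ∀ k, c (k + 1) = r * c k + b (k + 1) := fun _ ↦ rfl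
    have key : c (k + 1) * b (k + 3) * b (k + 1) ≤ c (k + 2) * b (k + 2) * b (k + 1) := by
      have hc0 : 0 ≤ c (k + 1) := (geomConv_pos hr hb _).le
      have hrb : 0 ≤ r * b (k + 2) := mul_nonneg hr (hb _).le
      calc c (k + 1) * b (k + 3) * b (k + 1) ≤ c (k + 1) * b (k + 2) ^ 2 := by
            nlinarith [mul_le_mul_of_nonneg_left (hlc (k + 1)) hc0]
        _ = r * b (k + 2) * (c k * b (k + 2)) + b (k + 1) * b (k + 2) ^ 2 := by
            rw [hc k]; ring
        _ ≤ r * b (k + 2) * (c (k + 1) * b (k + 1)) + b (k + 1) * b (k + 2) ^ 2 := by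
            gcongr
        _ = c (k + 2) * b (k + 2) * b (k + 1) := by
            rw [hc (k + 1)]; ring
    exact le_of_mul_le_mul_right key (hb (k + 1))

lemma isLogConcaveSeq_geomConv (hr : 0 ≤ r) (hb : ∀ k, 0 < b k) (hlc : IsLogConcaveSeq b) :
    IsLogConcaveSeq (geomConv r b) := fun k ↦ by
  set c := geomConv r b
  have hc : ∀ k, c (k + 1) = r * c k + b (k + 1) := fun _ ↦ rfl
  calc c k * c (k + 2) = r * c k * c (k + 1) + c k * b (k + 2) := by rw [hc (k + 1)]; ring
    _ ≤ r * c k * c (k + 1) + c (k + 1) * b (k + 1) := by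
        linarith [geomConv_mul_le hr hb hlc k]
    _ = c (k + 1) ^ 2 := by rw [hc k]; ring

end geomConv

namespace ProbabilityTheory

variable {Ω : Type*} [MeasurableSpace Ω] {P : Measure Ω} [IsFiniteMeasure P]

lemma measureReal_eq_of_geometric_tail {Y : Ω → ℕ} (hY : Measurable Y) {y : ℝ} (hy : 0 ≤ y)
    (htail : ∀ k : ℕ, P {ω | k ≤ Y ω} = ENNReal.ofReal (y ^ k)) (k : ℕ) :
    P.real {ω | Y ω = k} = y ^ k * (1 - y) := by
  have hdiff : {ω | Y ω = k} = {ω | k ≤ Y ω} \ {ω | k + 1 ≤ Y ω} := by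
    ext ω; simp only [Set.mem_ofPred_eq, Set.mem_sdiff]; omega
  have hsub : {ω | k + 1 ≤ Y ω} ⊆ {ω | k ≤ Y ω} := fun _ ↦ Nat.le_of_succ_le
  rw [hdiff, measureReal_sdiff hsub (measurableSet_le measurable_const hY), measureReal_def,
    measureReal_def, htail, htail, ENNReal.toReal_ofReal (by positivity),
    ENNReal.toReal_ofReal (by positivity)]
  ring

lemma IndepFun.measureReal_add_eq_sum {X Y : Ω → ℕ} (hX : Measurable X) (hY : Measurable Y)
    (hXY : IndepFun X Y P) (m : ℕ) :
    P.real {ω | X ω + Y ω = m} =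
      ∑ p ∈ antidiagonal m, P.real {ω | X ω = p.1} * P.real {ω | Y ω = p.2} := by
  rw [show {ω | X ω + Y ω = m} = (fun ω ↦ (X ω, Y ω)) ⁻¹' antidiagonal m by ext; simp,
    ← sum_measureReal_preimage_singleton _ fun p _ ↦ (hX.prodMk hY) (measurableSet_singleton p)]
  refine sum_congr rfl fun p _ ↦ ?_
  have hfiber : (fun ω ↦ (X ω, Y ω)) ⁻¹' {p} = X ⁻¹' {p.1} ∩ Y ⁻¹' {p.2} := by
    ext; simp [Prod.ext_iff]
  rw [hfiber, measureReal_def, hXY.measure_inter_preimage_eq_mul _ _ (measurableSet_singleton _)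
    (measurableSet_singleton _), ENNReal.toReal_mul]
  rfl

lemma IndepFun.measureReal_add_geometric_eq_geomConv {X Y : Ω → ℕ} (hX : Measurable X)
    (hY : Measurable Y) (hXY : IndepFun X Y P) {y : ℝ} (hy : 0 ≤ y)
    (htail : ∀ k : ℕ, P {ω | k ≤ Y ω} = ENNReal.ofReal (y ^ k)) (m : ℕ) :
    P.real {ω | X ω + Y ω = m} =
      (1 - y) * geomConv y (fun j ↦ P.real {ω | X ω = j}) m := by
  rw [hXY.measureReal_add_eq_sum hX hY, geomConv_eq_sum, mul_sum]
  refine sum_congr rfl fun p _ ↦ ?_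
  rw [measureReal_eq_of_geometric_tail hY hy htail]
  ring

lemma IsLogConcaveSeq.measure_mul_le {s : ℕ → Set Ω} (h : IsLogConcaveSeq fun m ↦ P.real (s m))
    (k : ℕ) : P (s k) * P (s (k + 2)) ≤ P (s (k + 1)) ^ 2 := by
  simp only [← ofReal_measureReal (measure_ne_top P _)]
  rw [← ENNReal.ofReal_mul measureReal_nonneg, ← ENNReal.ofReal_pow measureReal_nonneg]
  exact ENNReal.ofReal_le_ofReal (h k)

lemma sum_geometric_pos_and_isLogConcaveSeq {x : ℝ} (hx0 : 0 < x) (hx1 : x < 1) {Z : ℕ → Ω → ℕ}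
    (hmeas : ∀ i, Measurable (Z i)) (hindep : iIndepFun Z P)
    (hgeom : ∀ i, 1 ≤ i → ∀ k : ℕ, P {ω | k ≤ Z i ω} = ENNReal.ofReal (x ^ (i * k)))
    {n : ℕ} (hn : 1 ≤ n) :
    (∀ m, 0 < P.real {ω | ∑ i ∈ Icc 1 n, Z i ω = m}) ∧
      IsLogConcaveSeq fun m ↦ P.real {ω | ∑ i ∈ Icc 1 n, Z i ω = m} := by
  have htail : ∀ i, 1 ≤ i → ∀ k : ℕ, P {ω | k ≤ Z i ω} = ENNReal.ofReal ((x ^ i) ^ k) :=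
    fun i hi k ↦ by rw [← pow_mul]; exact hgeom i hi k
  set S : ℕ → Ω → ℕ := fun n ω ↦ ∑ i ∈ Icc 1 n, Z i ω
  set a : ℕ → ℕ → ℝ := fun n m ↦ P.real {ω | S n ω = m}
  change (∀ m, 0 < a n m) ∧ IsLogConcaveSeq (a n)
  induction n, hn using Nat.le_induction with
  | base =>
    have ha : a 1 = fun m ↦ x ^ m * (1 - x) := funext fun m ↦ by
      simpa [a, S] using measureReal_eq_of_geometric_tail (hmeas 1) hx0.le
        (by simpa using htail 1 le_rfl) m
    exact ⟨fun m ↦ ha ▸ by positivity, ha ▸ isLogConcaveSeq_geometric x (1 - x)⟩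
  | succ n hn ih =>
    have hindep' : IndepFun (S n) (Z (n + 1)) P := by
      have h := hindep.indepFun_finsetSum_of_notMem hmeas (s := Icc 1 n) (i := n + 1) (by simp)
      rwa [show ∑ i ∈ Icc 1 n, Z i = S n from funext fun ω ↦ sum_apply ω _ _] at h
    have hy : 0 ≤ x ^ (n + 1) := by positivity
    have hy1 : 0 < 1 - x ^ (n + 1) := by linarith [pow_lt_one₀ hx0.le hx1 n.add_one_ne_zero]
    have ha : a (n + 1) = fun m ↦ (1 - x ^ (n + 1)) * geomConv (x ^ (n + 1)) (a n) m :=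
      funext fun m ↦ by
        simpa [a, S, sum_Icc_succ_top (Nat.le_succ_of_le hn)] using
          hindep'.measureReal_add_geometric_eq_geomConv (by fun_prop) (hmeas _) hy
            (htail _ (by omega)) m
    exact ⟨fun m ↦ ha ▸ mul_pos hy1 (geomConv_pos hy ih.1 m),
      ha ▸ (isLogConcaveSeq_geomConv hy ih.1 ih.2).const_mul _⟩

end ProbabilityTheory

theorem Sn_logconcave {Ω : Type*} [MeasurableSpace Ω] (P : Measure Ω)
    [IsProbabilityMeasure P] (x : ℝ) (hx0 : 0 < x) (hx1 : x < 1)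
    (Z : ℕ → Ω → ℕ) (hmeas : ∀ i, Measurable (Z i))
    (hindep : iIndepFun Z P)
    (hgeom : ∀ i, 1 ≤ i → ∀ k : ℕ, P {ω | k ≤ Z i ω} = ENNReal.ofReal (x ^ (i * k)))
    (n : ℕ) (hn : 1 ≤ n) (k : ℕ) :
    P {ω | ∑ i ∈ Finset.Icc 1 n, Z i ω = k}
        * P {ω | ∑ i ∈ Finset.Icc 1 n, Z i ω = k + 2}
      ≤ (P {ω | ∑ i ∈ Finset.Icc 1 n, Z i ω = k + 1}) ^ 2 := by
  exact (sum_geometric_pos_and_isLogConcaveSeq hx0 hx1 hmeas hindep hgeom hn).2.measure_mul_le k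
end

section
/- Let 0 < x < 1, n ≥ 1, S = ∑_{i≥1} Zᵢ and S_n = ∑_{i=1}^n Zᵢ where Zᵢ are independent geometric random variables with P(Zᵢ ≥ k) = x^{ik}. Then the total variation distance between the distributions of S and S_n satisfies d_TV(S, S_n) ≤ 1 − ∏_{i=n+1}^∞ (1−xⁱ) ≤ x^{n+1}/(1−x). -/
/-!
Couple `S` and `S_n` on the same probability space: they can only differ when some `Z i` with
`i > n` is nonzero, so the total variation distance is at most `1 - P(Z i = 0 for all i > n)`,
and by independence that probability is `∏_{i>n} (1 - x^i)`. The second inequality is the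
Weierstrass product inequality `1 - ∏ (1 - a i) ≤ ∑ a i` followed by a geometric sum.
-/

open MeasureTheory ProbabilityTheory Filter

section Coupling

variable {Ω α : Type*} [MeasurableSpace Ω] {μ : Measure Ω} [IsFiniteMeasure μ]

lemma measureReal_preimage_le_add_measureReal_ne (X Y : Ω → α) (B : Set α) :
    μ.real (X ⁻¹' B) ≤ μ.real (Y ⁻¹' B) + μ.real {ω | X ω ≠ Y ω} := by
  refine (measureReal_mono fun ω hω => ?_).trans (measureReal_union_le _ _)
  by_cases h : X ω = Y ω
  · exact Or.inl (by simpa [Set.mem_preimage, ← h] using hω)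
  · exact Or.inr h

lemma abs_measureReal_preimage_sub_le (X Y : Ω → α) (B : Set α) :
    |μ.real (X ⁻¹' B) - μ.real (Y ⁻¹' B)| ≤ μ.real {ω | X ω ≠ Y ω} := by
  have hXY := measureReal_preimage_le_add_measureReal_ne (μ := μ) X Y B
  have hYX := measureReal_preimage_le_add_measureReal_ne (μ := μ) Y X B
  simp only [ne_comm (a := Y _)] at hYX
  rw [abs_sub_le_iff]
  constructor <;> linarith

lemma iSup_abs_measureReal_preimage_sub_le (X Y : Ω → α) :
    ⨆ B : Set α, |μ.real (X ⁻¹' B) - μ.real (Y ⁻¹' B)|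
      ≤ μ.real {ω | X ω ≠ Y ω} :=
  ciSup_le (abs_measureReal_preimage_sub_le X Y)

end Coupling

lemma one_sub_prod_one_sub_le_sum {ι : Type*} (s : Finset ι) {a : ι → ℝ}
    (ha₀ : ∀ i, 0 ≤ a i) (ha₁ : ∀ i, a i ≤ 1) :
    1 - ∏ i ∈ s, (1 - a i) ≤ ∑ i ∈ s, a i := by
  classical
  induction s using Finset.induction_on with
  | empty => simp
  | insert j s hj ih =>
    rw [Finset.prod_insert hj, Finset.sum_insert hj]
    have hprod₀ : 0 ≤ ∏ i ∈ s, (1 - a i) :=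
      Finset.prod_nonneg fun i _ => sub_nonneg.2 (ha₁ i)
    have hprod₁ : ∏ i ∈ s, (1 - a i) ≤ 1 :=
      Finset.prod_le_one (fun i _ => sub_nonneg.2 (ha₁ i)) fun i _ => by linarith [ha₀ i]
    nlinarith [ha₀ j]

lemma one_sub_tprod_one_sub_le_tsum {ι : Type*} {a : ι → ℝ}
    (ha₀ : ∀ i, 0 ≤ a i) (ha₁ : ∀ i, a i ≤ 1) (ha : Summable a) :
    1 - ∏' i, (1 - a i) ≤ ∑' i, a i := by
  have hmul : Multipliable fun i => 1 - a i := by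
    simpa only [sub_eq_add_neg] using Real.multipliable_one_add_of_summable ha.neg
  exact le_of_tendsto_of_tendsto' (hmul.hasProd.const_sub 1) ha.hasSum
    fun s => one_sub_prod_one_sub_le_sum s ha₀ ha₁

lemma ENNReal.toReal_tprod_of_le_one {ι : Type*} {f : ι → ENNReal} (hf : ∀ i, f i ≤ 1) :
    (∏' i, f i).toReal = ∏' i, (f i).toReal := by
  have hne : ∏' i, f i ≠ ⊤ := by
    refine ne_top_of_le_ne_top ENNReal.one_ne_top ?_
    rw [ENNReal.tprod_eq_iInf_prod hf]
    exact iInf_le_of_le ∅ Finset.prod_empty.le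
  have hprod : HasProd (fun i => (f i).toReal) (∏' i, f i).toReal := by
    simpa only [HasProd, Function.comp_def, ENNReal.toReal_prod] using
      (ENNReal.tendsto_toReal hne).comp (ENNReal.multipliable_of_le_one hf).hasProd
  exact hprod.tprod_eq.symm

section Probability

variable {Ω : Type*} [MeasurableSpace Ω] {μ : Measure Ω} [IsProbabilityMeasure μ]

lemma ProbabilityTheory.iIndepFun.measure_iInter_preimage_eq_tprod {ι β : Type*}
    [Countable ι] [MeasurableSpace β] {f : ι → Ω → β} (hf : iIndepFun f μ)
    (hmeas : ∀ i, Measurable (f i))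
    {s : ι → Set β} (hs : ∀ i, MeasurableSet (s i)) :
    μ (⋂ i, f i ⁻¹' s i) = ∏' i, μ (f i ⁻¹' s i) := by
  have hanti : Antitone fun t : Finset ι => ⋂ i ∈ t, f i ⁻¹' s i :=
    fun t t' htt' => Set.biInter_subset_biInter_left htt'
  rw [Set.iInter_eq_iInter_finset, hanti.measure_iInter,
    ENNReal.tprod_eq_iInf_prod fun _ => prob_le_one]
  · congr! with t
    exact hf.meas_biInter fun i _ => ⟨s i, hs i, rfl⟩
  · exact fun t => (Finset.measurableSet_biInter t fun i _ => hmeas i (hs i)).nullMeasurableSet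
  · exact ⟨∅, measure_ne_top _ _⟩

lemma measure_preimage_zero_eq_ofReal_one_sub {N : Ω → ℕ} (hN : Measurable N) {q : ℝ}
    (hq : 0 ≤ q) (hpos : μ {ω | 1 ≤ N ω} = ENNReal.ofReal q) :
    μ (N ⁻¹' {0}) = ENNReal.ofReal (1 - q) := by
  have hcompl : N ⁻¹' {0} = {ω | 1 ≤ N ω}ᶜ := by
    ext; simp [Nat.one_le_iff_ne_zero]
  rw [hcompl, prob_compl_eq_one_sub (measurableSet_le measurable_const hN), hpos,
    ← ENNReal.ofReal_one, ← ENNReal.ofReal_sub _ hq]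

end Probability

lemma eq_sum_Icc_of_forall_lt_eq_zero {z : ℕ → ℕ} {s n : ℕ}
    (hs : ∀ᶠ N in atTop, s = ∑ i ∈ Finset.Icc 1 N, z i) (hz : ∀ i, n < i → z i = 0) :
    s = ∑ i ∈ Finset.Icc 1 n, z i := by
  obtain ⟨N, hsN, hnN⟩ := (hs.and (eventually_ge_atTop n)).exists
  rw [hsN]
  refine (Finset.sum_subset (Finset.Icc_subset_Icc_right hnN) fun i hi hin => hz i ?_).symm
  simp only [Finset.mem_Icc] at hi hin
  omega

theorem dTV_S_Sn_upper_general {Ω : Type*} [MeasurableSpace Ω] (P : Measure Ω)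
    [IsProbabilityMeasure P] (x : ℝ) (hx0 : 0 < x) (hx1 : x < 1)
    (Z : ℕ → Ω → ℕ) (hmeas : ∀ i, Measurable (Z i))
    (hindep : iIndepFun Z P)
    (hgeom : ∀ i, 1 ≤ i → ∀ k : ℕ, P {ω | k ≤ Z i ω} = ENNReal.ofReal (x ^ (i * k)))
    (S : Ω → ℕ)
    (hS : ∀ᵐ ω ∂P, ∀ᶠ N in atTop, S ω = ∑ i ∈ Finset.Icc 1 N, Z i ω)
    (n : ℕ) :
    (⨆ B : Set ℕ, |(P {ω | S ω ∈ B}).toReal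
        - (P {ω | (∑ i ∈ Finset.Icc 1 n, Z i ω) ∈ B}).toReal|)
      ≤ 1 - ∏' i : ℕ, (1 - x ^ (n + 1 + i))
    ∧ 1 - ∏' i : ℕ, (1 - x ^ (n + 1 + i)) ≤ x ^ (n + 1) / (1 - x) := by
  have hpow₀ (i : ℕ) : 0 ≤ x ^ i := pow_nonneg hx0.le i
  have hpow₁ (i : ℕ) : x ^ i ≤ 1 := pow_le_one₀ hx0.le hx1.le
  have htail : P.real (⋂ i : ℕ, Z (n + 1 + i) ⁻¹' {0})
      = ∏' i : ℕ, (1 - x ^ (n + 1 + i)) := by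
    rw [measureReal_def,
      (hindep.precomp (add_right_injective (n + 1))).measure_iInter_preimage_eq_tprod
        (fun _ => hmeas _) (fun _ => measurableSet_singleton 0),
      ENNReal.toReal_tprod_of_le_one fun _ => prob_le_one]
    refine tprod_congr fun i => ?_
    rw [measure_preimage_zero_eq_ofReal_one_sub (hmeas _) (hpow₀ _)
        (by simpa using hgeom (n + 1 + i) (by omega) 1),
      ENNReal.toReal_ofReal (sub_nonneg.2 (hpow₁ _))]
  have hcoupling : P.real {ω | S ω ≠ ∑ i ∈ Finset.Icc 1 n, Z i ω}
      ≤ 1 - ∏' i : ℕ, (1 - x ^ (n + 1 + i)) := by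
    rw [← htail,
      ← probReal_compl_eq_one_sub (.iInter fun _ => hmeas _ (measurableSet_singleton 0))]
    refine ENNReal.toReal_mono (measure_ne_top _ _) (measure_mono_ae ?_)
    filter_upwards [hS] with ω hω hne hω₀
    refine hne (eq_sum_Icc_of_forall_lt_eq_zero hω fun i hi => ?_)
    simpa [show n + 1 + (i - (n + 1)) = i by omega] using Set.mem_iInter.1 hω₀ (i - (n + 1))
  have hgeomsum : HasSum (fun i => x ^ (n + 1 + i)) (x ^ (n + 1) / (1 - x)) := by
    simpa only [pow_add, div_eq_mul_inv] using
      (hasSum_geometric_of_lt_one hx0.le hx1).mul_left (x ^ (n + 1))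
  exact ⟨(iSup_abs_measureReal_preimage_sub_le S _).trans hcoupling,
    (one_sub_tprod_one_sub_le_tsum (fun _ => hpow₀ _) (fun _ => hpow₁ _)
      hgeomsum.summable).trans_eq hgeomsum.tsum_eq⟩

theorem dTV_S_Sn_upper {Ω : Type*} [MeasurableSpace Ω] (P : Measure Ω)
    [IsProbabilityMeasure P] (x : ℝ) (hx0 : 0 < x) (hx1 : x < 1)
    (Z : ℕ → Ω → ℕ) (hmeas : ∀ i, Measurable (Z i))
    (hindep : iIndepFun Z P)
    (hgeom : ∀ i, 1 ≤ i → ∀ k : ℕ, P {ω | k ≤ Z i ω} = ENNReal.ofReal (x ^ (i * k)))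
    (S : Ω → ℕ) (hSmeas : Measurable S)
    (hS : ∀ᵐ ω ∂P, ∀ᶠ N in atTop, S ω = ∑ i ∈ Finset.Icc 1 N, Z i ω)
    (n : ℕ) (hn : 1 ≤ n) :
    (⨆ B : Set ℕ, |(P {ω | S ω ∈ B}).toReal
        - (P {ω | (∑ i ∈ Finset.Icc 1 n, Z i ω) ∈ B}).toReal|)
      ≤ 1 - ∏' i : ℕ, (1 - x ^ (n + 1 + i))
    ∧ 1 - ∏' i : ℕ, (1 - x ^ (n + 1 + i)) ≤ x ^ (n + 1) / (1 - x) :=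
  dTV_S_Sn_upper_general P x hx0 hx1 Z hmeas hindep hgeom S hS n
end

section
/- Let 0 < x ≤ 1/2, n ≥ 1, S = ∑_{i≥1} Zᵢ, S_n = ∑_{i=1}^n Zᵢ with Zᵢ independent geometric, P(Zᵢ ≥ k) = x^{ik}. Then d_TV(S, S_n) = ∏_{i=1}^n (1−xⁱ) · (1 − ∏_{i=n+1}^∞ (1−xⁱ)) = P(S_n = 0) − P(S = 0). -/
/-!
Let `F N k = P(S_N = k)`. Conditioning on `Z_{N+1}`, which is geometric of ratio `q = x^{N+1}`,
gives `F (N+1) 0 = (1 - q) F N 0` and `F (N+1) (k+1) = (1 - q) F N (k+1) + q F (N+1) k`.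
From these, by induction on `N`, `F N (k+1) ≤ (x + ⋯ + x^N) F N k`, and for `x ≤ 1/2` the
geometric sum is at most `1 - q`, so `F N (k+1) ≤ (1 - q) F N k ≤ F (N+1) k`; plugged back into
the recursion this shows that `N ↦ F N k` increases for every `k ≥ 1`. Letting `N → ∞`,
`P(S_n = k) ≤ P(S = k)` for all `k ≠ 0`, so the supremum over `B` of `P(S_n ∈ B) - P(S ∈ B)`
is attained at `B = {0}`.
-/

open MeasureTheory ProbabilityTheory Filter Topology Finset

lemma sum_range_pow_succ_le {x : ℝ} (hx0 : 0 ≤ x) (hx : x ≤ 1 / 2) (N : ℕ) :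
    ∑ i ∈ range N, x ^ (i + 1) ≤ 1 - x ^ (N + 1) := by
  have hs : 0 ≤ ∑ i ∈ range N, x ^ i := sum_nonneg fun i _ => pow_nonneg hx0 _
  calc ∑ i ∈ range N, x ^ (i + 1) = (∑ i ∈ range N, x ^ i) * x := by
        rw [sum_mul]; simp only [pow_succ]
    _ ≤ (∑ i ∈ range N, x ^ i) * (1 - x) := by gcongr; linarith
    _ = 1 - x ^ N := by linear_combination -geom_sum_mul x N
    _ ≤ 1 - x ^ (N + 1) :=
        sub_le_sub_left (pow_le_pow_of_le_one hx0 (by linarith) (Nat.le_succ N)) 1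

/-- The law of `Z₁ + ⋯ + Z_N` for independent `Zᵢ` with `P(Zᵢ = j) = (1 - xⁱ) x^{ij}`. -/
noncomputable def geomSumPMF (x : ℝ) : ℕ → ℕ → ℝ
  | 0, k => if k = 0 then 1 else 0
  | N + 1, k =>
    ∑ p ∈ antidiagonal k, geomSumPMF x N p.1 * ((1 - x ^ (N + 1)) * (x ^ (N + 1)) ^ p.2)

namespace geomSumPMF

variable {x : ℝ}

lemma succ_zero (N : ℕ) : geomSumPMF x (N + 1) 0 = (1 - x ^ (N + 1)) * geomSumPMF x N 0 := by
  simp [geomSumPMF, mul_comm]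

lemma succ_succ (N k : ℕ) :
    geomSumPMF x (N + 1) (k + 1) =
      (1 - x ^ (N + 1)) * geomSumPMF x N (k + 1) + x ^ (N + 1) * geomSumPMF x (N + 1) k := by
  rw [geomSumPMF, Nat.sum_antidiagonal_succ', geomSumPMF, mul_sum]
  simp only [pow_zero, pow_succ]
  congr 1
  · ring
  · exact sum_congr rfl fun p _ => by ring

lemma zero_eq_prod (N : ℕ) : geomSumPMF x N 0 = ∏ i ∈ range N, (1 - x ^ (i + 1)) := by
  induction N with
  | zero => simp [geomSumPMF]
  | succ N ih => rw [succ_zero, ih, prod_range_succ, mul_comm]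

section

variable (hx0 : 0 ≤ x) (hx1 : x ≤ 1)
include hx0 hx1

lemma nonneg (N k : ℕ) : 0 ≤ geomSumPMF x N k := by
  induction N generalizing k with
  | zero => unfold geomSumPMF; split_ifs <;> norm_num
  | succ N ih =>
    have hq : x ^ (N + 1) ≤ 1 := pow_le_one₀ hx0 hx1
    exact sum_nonneg fun p _ => mul_nonneg (ih _)
      (mul_nonneg (by linarith) (pow_nonneg (pow_nonneg hx0 _) _))

lemma mul_le_succ (N k : ℕ) :
    (1 - x ^ (N + 1)) * geomSumPMF x N k ≤ geomSumPMF x (N + 1) k := by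
  cases k with
  | zero => exact (succ_zero N).ge
  | succ k =>
    rw [succ_succ]
    exact le_add_of_nonneg_right (mul_nonneg (pow_nonneg hx0 _) (nonneg hx0 hx1 _ _))

lemma succ_le_mul (N k : ℕ) :
    geomSumPMF x N (k + 1) ≤ (∑ i ∈ range N, x ^ (i + 1)) * geomSumPMF x N k := by
  induction N generalizing k with
  | zero => simp [geomSumPMF]
  | succ N ih =>
    calc geomSumPMF x (N + 1) (k + 1)
        = (1 - x ^ (N + 1)) * geomSumPMF x N (k + 1) + x ^ (N + 1) * geomSumPMF x (N + 1) k :=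
          succ_succ N k
      _ ≤ (∑ i ∈ range N, x ^ (i + 1)) * ((1 - x ^ (N + 1)) * geomSumPMF x N k)
            + x ^ (N + 1) * geomSumPMF x (N + 1) k := by
          rw [mul_left_comm]
          gcongr
          · exact sub_nonneg.2 (pow_le_one₀ hx0 hx1)
          · exact ih k
      _ ≤ (∑ i ∈ range (N + 1), x ^ (i + 1)) * geomSumPMF x (N + 1) k := by
          rw [sum_range_succ, add_mul]
          gcongr
          exact mul_le_succ hx0 hx1 N k

end

lemma le_succ (hx0 : 0 ≤ x) (hx : x ≤ 1 / 2) (N k : ℕ) :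
    geomSumPMF x N (k + 1) ≤ geomSumPMF x (N + 1) (k + 1) := by
  have hx1 : x ≤ 1 := by linarith
  have hF : geomSumPMF x N (k + 1) ≤ geomSumPMF x (N + 1) k :=
    calc geomSumPMF x N (k + 1) ≤ (∑ i ∈ range N, x ^ (i + 1)) * geomSumPMF x N k :=
          succ_le_mul hx0 hx1 N k
      _ ≤ (1 - x ^ (N + 1)) * geomSumPMF x N k := by
          gcongr
          · exact nonneg hx0 hx1 N k
          · exact sum_range_pow_succ_le hx0 hx N
      _ ≤ geomSumPMF x (N + 1) k := mul_le_succ hx0 hx1 N k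
  rw [succ_succ]
  linarith [mul_le_mul_of_nonneg_left hF (pow_nonneg hx0 (N + 1))]

lemma monotone (hx0 : 0 ≤ x) (hx : x ≤ 1 / 2) (k : ℕ) :
    Monotone fun N => geomSumPMF x N (k + 1) :=
  monotone_nat_of_le_succ fun N => le_succ hx0 hx N k

end geomSumPMF

lemma multipliable_one_sub_pow_add {x : ℝ} (hx : |x| < 1) (k : ℕ) :
    Multipliable fun i : ℕ => 1 - x ^ (i + k) := by
  simpa [sub_eq_add_neg] using Real.multipliable_one_add_of_summable
    ((summable_nat_add_iff k).2 (summable_geometric_of_abs_lt_one hx)).neg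

lemma prod_Icc_one_sub_pow_mul_one_sub_tprod {x : ℝ} (hx : |x| < 1) (n : ℕ) :
    (∏ i ∈ Icc 1 n, (1 - x ^ i)) * (1 - ∏' i : ℕ, (1 - x ^ (n + 1 + i))) =
      ∏ i ∈ range n, (1 - x ^ (i + 1)) - ∏' i : ℕ, (1 - x ^ (i + 1)) := by
  have hIcc : ∏ i ∈ Icc 1 n, (1 - x ^ i) = ∏ i ∈ range n, (1 - x ^ (i + 1)) := by
    rw [range_eq_Ico, prod_Ico_add' (fun i => 1 - x ^ i), zero_add, Ico_add_one_right_eq_Icc]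
  have htail : ∏' i : ℕ, (1 - x ^ (n + 1 + i)) = ∏' i : ℕ, (1 - x ^ (i + n + 1)) :=
    tprod_congr fun i => by rw [show n + 1 + i = i + n + 1 by omega]
  rw [hIcc, htail, ← Multipliable.prod_mul_tprod_nat_mul' (f := fun i => 1 - x ^ (i + 1)) (k := n)
    (multipliable_one_sub_pow_add hx (n + 1))]
  ring

section Probability

variable {Ω : Type*} [MeasurableSpace Ω] {μ : Measure Ω}

lemma measureReal_eq_sub_of_nat [IsFiniteMeasure μ] {X : Ω → ℕ} (hX : Measurable X) (k : ℕ) :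
    μ.real {ω | X ω = k} = μ.real {ω | k ≤ X ω} - μ.real {ω | k + 1 ≤ X ω} := by
  have hsub : {ω | k + 1 ≤ X ω} ⊆ {ω | k ≤ X ω} := fun ω h => (Nat.le_succ k).trans h
  rw [← measureReal_sdiff hsub (hX measurableSet_Ici)]
  congr 1
  ext ω
  simp only [Set.mem_ofPred_eq, Set.mem_sdiff, not_le]
  omega

lemma measureReal_eq_of_measure_le_eq_pow [IsFiniteMeasure μ] {X : Ω → ℕ} (hX : Measurable X)
    {q : ℝ} (hq : 0 ≤ q) (hX_tail : ∀ k : ℕ, μ {ω | k ≤ X ω} = ENNReal.ofReal (q ^ k)) (k : ℕ) :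
    μ.real {ω | X ω = k} = (1 - q) * q ^ k := by
  rw [measureReal_eq_sub_of_nat hX, measureReal_def, measureReal_def, hX_tail, hX_tail,
    ENNReal.toReal_ofReal (by positivity), ENNReal.toReal_ofReal (by positivity)]
  ring

lemma ProbabilityTheory.IndepFun.measureReal_add_eq_sum_s8 [IsFiniteMeasure μ] {X Y : Ω → ℕ}
    (hXY : IndepFun X Y μ) (hX : Measurable X) (hY : Measurable Y) (k : ℕ) :
    μ.real {ω | X ω + Y ω = k} =
      ∑ p ∈ antidiagonal k, μ.real {ω | X ω = p.1} * μ.real {ω | Y ω = p.2} := by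
  have hunion : {ω | X ω + Y ω = k} = ⋃ p ∈ antidiagonal k, X ⁻¹' {p.1} ∩ Y ⁻¹' {p.2} := by
    ext ω
    simp
  rw [hunion, measureReal_biUnion_finset]
  · refine sum_congr rfl fun p _ => ?_
    rw [measureReal_def, hXY.measure_inter_preimage_eq_mul _ _ (measurableSet_singleton _)
      (measurableSet_singleton _), ENNReal.toReal_mul]
    rfl
  · intro p _ p' _ hpp'
    exact Set.disjoint_left.2 fun ω hω hω' =>
      hpp' (Prod.ext (hω.1.symm.trans hω'.1) (hω.2.symm.trans hω'.2))
  · exact fun p _ => (hX (measurableSet_singleton _)).inter (hY (measurableSet_singleton _))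

lemma measureReal_sum_eq_geomSumPMF [IsProbabilityMeasure μ] {x : ℝ} (hx0 : 0 ≤ x)
    {Z : ℕ → Ω → ℕ} (hmeas : ∀ i, Measurable (Z i)) (hindep : iIndepFun Z μ)
    (hgeom : ∀ i, 1 ≤ i → ∀ k : ℕ, μ {ω | k ≤ Z i ω} = ENNReal.ofReal (x ^ (i * k)))
    (N k : ℕ) :
    μ.real {ω | ∑ i ∈ Icc 1 N, Z i ω = k} = geomSumPMF x N k := by
  induction N generalizing k with
  | zero => rcases eq_or_ne k 0 with rfl | hk <;> simp [geomSumPMF, eq_comm, *]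
  | succ N ih =>
    have hindep' : IndepFun (fun ω => ∑ i ∈ Icc 1 N, Z i ω) (Z (N + 1)) μ := by
      convert hindep.indepFun_finsetSum_of_notMem hmeas (s := Icc 1 N) (i := N + 1) (by simp)
        using 1
      ext ω
      simp
    have hZ : ∀ j, μ.real {ω | Z (N + 1) ω = j} = (1 - x ^ (N + 1)) * (x ^ (N + 1)) ^ j :=
      measureReal_eq_of_measure_le_eq_pow (hmeas _) (pow_nonneg hx0 _)
        (fun j => by rw [hgeom _ N.succ_pos, pow_mul])
    have h := hindep'.measureReal_add_eq_sum_s8 (Finset.measurable_sum _ fun i _ => hmeas i)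
      (hmeas _) k
    simp only [sum_Icc_succ_top (Nat.le_add_left 1 N), h, geomSumPMF, ih, hZ]

lemma tendsto_measureReal_preimage_of_ae_eventually_eq [IsFiniteMeasure μ] {α : Type*}
    [MeasurableSpace α] {X : ℕ → Ω → α} {Y : Ω → α} (hX : ∀ N, Measurable (X N))
    (hY : Measurable Y) (hXY : ∀ᵐ ω ∂μ, ∀ᶠ N in atTop, Y ω = X N ω) {s : Set α}
    (hs : MeasurableSet s) :
    Tendsto (fun N => μ.real (X N ⁻¹' s)) atTop (𝓝 (μ.real (Y ⁻¹' s))) := by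
  refine (ENNReal.tendsto_toReal (measure_ne_top μ _)).comp
    (tendsto_measure_of_ae_tendsto_indicator_of_isFiniteMeasure atTop (hY hs)
      (fun N => hX N hs) ?_)
  filter_upwards [hXY] with ω hω
  filter_upwards [hω] with N hN
  simp [hN]

section TotalVariation

variable {α : Type*} [MeasurableSpace α] [MeasurableSingletonClass α] [Countable α]
  {X Y : Ω → α} {a : α}

lemma measure_preimage_le_of_forall_ne (hX : Measurable X) (hY : Measurable Y)
    (hXY : ∀ b ≠ a, μ (X ⁻¹' {b}) ≤ μ (Y ⁻¹' {b})) {B : Set α} (ha : a ∉ B) :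
    μ (X ⁻¹' B) ≤ μ (Y ⁻¹' B) := by
  rw [← tsum_measure_preimage_singleton B.to_countable fun b _ => hX (measurableSet_singleton b),
    ← tsum_measure_preimage_singleton B.to_countable fun b _ => hY (measurableSet_singleton b)]
  exact ENNReal.tsum_le_tsum fun b => hXY b (ne_of_mem_of_not_mem b.2 ha)

lemma iSup_abs_measureReal_preimage_sub_eq [IsProbabilityMeasure μ] (hX : Measurable X)
    (hY : Measurable Y) (hXY : ∀ b ≠ a, μ (X ⁻¹' {b}) ≤ μ (Y ⁻¹' {b})) :
    ⨆ B : Set α, |μ.real (Y ⁻¹' B) - μ.real (X ⁻¹' B)| =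
      μ.real (X ⁻¹' {a}) - μ.real (Y ⁻¹' {a}) := by
  have hmeas : ∀ B : Set α, MeasurableSet B := fun B => B.to_countable.measurableSet
  have hle : ∀ B : Set α, a ∉ B → μ.real (X ⁻¹' B) ≤ μ.real (Y ⁻¹' B) := fun B ha =>
    ENNReal.toReal_mono (measure_ne_top μ _) (measure_preimage_le_of_forall_ne hX hY hXY ha)
  have hcompl : ∀ (W : Ω → α) (hW : Measurable W) (B : Set α),
      μ.real (W ⁻¹' Bᶜ) = 1 - μ.real (W ⁻¹' B) := fun W hW B => by
    rw [Set.preimage_compl, probReal_compl_eq_one_sub (hW (hmeas B))]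
  have hD : ∀ B : Set α, μ.real (X ⁻¹' B) - μ.real (Y ⁻¹' B) ≤
      μ.real (X ⁻¹' {a}) - μ.real (Y ⁻¹' {a}) := by
    intro B
    by_cases ha : a ∈ B
    · have hsplit : ∀ (W : Ω → α) (hW : Measurable W),
          μ.real (W ⁻¹' B) = μ.real (W ⁻¹' {a}) + μ.real (W ⁻¹' (B \ {a})) := fun W hW => by
        rw [← measureReal_union (Set.disjoint_sdiff_right.preimage W) (hW (hmeas _)),
          ← Set.preimage_union, Set.union_sdiff_cancel (Set.singleton_subset_iff.2 ha)]
      rw [hsplit X hX, hsplit Y hY]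
      linarith [hle (B \ {a}) (by simp)]
    · have := hle {a}ᶜ (by simp)
      rw [hcompl X hX, hcompl Y hY] at this
      linarith [hle B ha]
  have habs : ∀ B : Set α, |μ.real (Y ⁻¹' B) - μ.real (X ⁻¹' B)| ≤
      μ.real (X ⁻¹' {a}) - μ.real (Y ⁻¹' {a}) := fun B => by
    refine abs_sub_le_iff.2 ⟨?_, hD B⟩
    have := hD Bᶜ
    rw [hcompl X hX, hcompl Y hY] at this
    linarith
  refine le_antisymm (ciSup_le habs) (le_ciSup_of_le ⟨_, Set.forall_mem_range.2 habs⟩ {a} ?_)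
  rw [abs_sub_comm]
  exact le_abs_self _

end TotalVariation

end Probability

theorem dTV_S_Sn_exact_general {Ω : Type*} [MeasurableSpace Ω] (P : Measure Ω)
    [IsProbabilityMeasure P] (x : ℝ) (hx0 : 0 < x) (hx2 : x ≤ 1 / 2)
    (Z : ℕ → Ω → ℕ) (hmeas : ∀ i, Measurable (Z i))
    (hindep : iIndepFun Z P)
    (hgeom : ∀ i, 1 ≤ i → ∀ k : ℕ, P {ω | k ≤ Z i ω} = ENNReal.ofReal (x ^ (i * k)))
    (S : Ω → ℕ) (hSmeas : Measurable S)
    (hS : ∀ᵐ ω ∂P, ∀ᶠ N in atTop, S ω = ∑ i ∈ Finset.Icc 1 N, Z i ω)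
    (n : ℕ) :
    (⨆ B : Set ℕ, |(P {ω | S ω ∈ B}).toReal
        - (P {ω | (∑ i ∈ Finset.Icc 1 n, Z i ω) ∈ B}).toReal|)
      = (∏ i ∈ Finset.Icc 1 n, (1 - x ^ i)) * (1 - ∏' i : ℕ, (1 - x ^ (n + 1 + i)))
    ∧ (⨆ B : Set ℕ, |(P {ω | S ω ∈ B}).toReal
        - (P {ω | (∑ i ∈ Finset.Icc 1 n, Z i ω) ∈ B}).toReal|)
      = (P {ω | ∑ i ∈ Finset.Icc 1 n, Z i ω = 0}).toReal - (P {ω | S ω = 0}).toReal := by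
  have hSN_meas : ∀ N, Measurable fun ω => ∑ i ∈ Icc 1 N, Z i ω :=
    fun N => Finset.measurable_sum _ fun i _ => hmeas i
  have hpmf := measureReal_sum_eq_geomSumPMF hx0.le hmeas hindep hgeom
  have hlim : ∀ k, Tendsto (fun N => geomSumPMF x N k) atTop (𝓝 (P.real {ω | S ω = k})) :=
    fun k => (tendsto_measureReal_preimage_of_ae_eventually_eq hSN_meas hSmeas hS
      (measurableSet_singleton k)).congr fun N => hpmf N k
  have hdom : ∀ k ≠ 0, P {ω | ∑ i ∈ Icc 1 n, Z i ω = k} ≤ P {ω | S ω = k} := by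
    intro k hk
    obtain ⟨k, rfl⟩ := Nat.exists_eq_succ_of_ne_zero hk
    refine (ENNReal.toReal_le_toReal (measure_ne_top P _) (measure_ne_top P _)).1 ?_
    exact (hpmf n (k + 1)).trans_le
      ((geomSumPMF.monotone hx0.le hx2 k).ge_of_tendsto (hlim (k + 1)) n)
  have hx : |x| < 1 := by rw [abs_of_pos hx0]; linarith
  have hS0 : P.real {ω | S ω = 0} = ∏' i : ℕ, (1 - x ^ (i + 1)) :=
    tendsto_nhds_unique (hlim 0) (by simpa only [geomSumPMF.zero_eq_prod] using
      (multipliable_one_sub_pow_add hx 1).tendsto_prod_tprod_nat)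
  have htv := iSup_abs_measureReal_preimage_sub_eq (hSN_meas n) hSmeas hdom
  refine ⟨htv.trans ?_, htv⟩
  simp only [Set.preimage, Set.mem_singleton_iff]
  rw [hpmf, geomSumPMF.zero_eq_prod, hS0, prod_Icc_one_sub_pow_mul_one_sub_tprod hx]

theorem dTV_S_Sn_exact {Ω : Type*} [MeasurableSpace Ω] (P : Measure Ω)
    [IsProbabilityMeasure P] (x : ℝ) (hx0 : 0 < x) (hx2 : x ≤ 1 / 2)
    (Z : ℕ → Ω → ℕ) (hmeas : ∀ i, Measurable (Z i))
    (hindep : iIndepFun Z P)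
    (hgeom : ∀ i, 1 ≤ i → ∀ k : ℕ, P {ω | k ≤ Z i ω} = ENNReal.ofReal (x ^ (i * k)))
    (S : Ω → ℕ) (hSmeas : Measurable S)
    (hS : ∀ᵐ ω ∂P, ∀ᶠ N in atTop, S ω = ∑ i ∈ Finset.Icc 1 N, Z i ω)
    (n : ℕ) (hn : 1 ≤ n) :
    (⨆ B : Set ℕ, |(P {ω | S ω ∈ B}).toReal
        - (P {ω | (∑ i ∈ Finset.Icc 1 n, Z i ω) ∈ B}).toReal|)
      = (∏ i ∈ Finset.Icc 1 n, (1 - x ^ i)) * (1 - ∏' i : ℕ, (1 - x ^ (n + 1 + i)))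
    ∧ (⨆ B : Set ℕ, |(P {ω | S ω ∈ B}).toReal
        - (P {ω | (∑ i ∈ Finset.Icc 1 n, Z i ω) ∈ B}).toReal|)
      = (P {ω | ∑ i ∈ Finset.Icc 1 n, Z i ω = 0}).toReal - (P {ω | S ω = 0}).toReal :=
  dTV_S_Sn_exact_general P x hx0 hx2 Z hmeas hindep hgeom S hSmeas hS n
end

section
/- For 0 < x ≤ 1/2, n ≥ 1, and all k ≥ 1: (1−xⁿ) ≤ ∏_{i=n+k}^∞ (1−xⁱ). Equivalently, 1 − xⁿ ≤ 1 − x^{n+1}/(1−x) ≤ ∏_{i=n+1}^∞ (1−xⁱ). -/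
open Finset in
lemma weierstrass_one_sub_sum_le_prod (f : ℕ → ℝ) (h0 : ∀ i, 0 ≤ f i)
    (h1 : ∀ i, f i ≤ 1) (s : Finset ℕ) :
    1 - ∑ i ∈ s, f i ≤ ∏ i ∈ s, (1 - f i) := by
  induction s using Finset.induction with
  | empty => simp
  | @insert a s ha ih =>
    rw [Finset.prod_insert ha, Finset.sum_insert ha]
    have hs : 0 ≤ ∑ i ∈ s, f i := Finset.sum_nonneg fun i _ => h0 i
    nlinarith [h0 a, h1 a, mul_le_mul_of_nonneg_left ih (by linarith [h1 a] : (0:ℝ) ≤ 1 - f a)]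

lemma tail_prod_ge (x : ℝ) (hx0 : 0 < x) (hx1 : x < 1) (m : ℕ) :
    1 - x ^ m / (1 - x) ≤ ∏' i : ℕ, (1 - x ^ (m + i)) := by
  set f : ℕ → ℝ := fun i => 1 - x ^ (m + i) with hf
  have hxn : ∀ i : ℕ, 0 < x ^ i := fun i => pow_pos hx0 i
  have hxle : ∀ i : ℕ, x ^ i ≤ 1 := fun i => pow_le_one₀ hx0.le hx1.le
  have hf0 : ∀ i, 0 ≤ f i := fun i => by simpa [hf] using hxle (m + i)
  have hf1 : ∀ i, f i ≤ 1 := fun i => by simp [hf]; positivity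
  -- partial sums bounded by tsum
  have hsum : Summable (fun i : ℕ => x ^ (m + i)) := by
    simpa [pow_add] using (summable_geometric_of_lt_one hx0.le hx1).mul_left (x ^ m)
  have htsum : ∑' i : ℕ, x ^ (m + i) = x ^ m / (1 - x) := by
    simp_rw [pow_add]
    rw [tsum_mul_left, tsum_geometric_of_lt_one hx0.le hx1, div_eq_mul_inv]
  have key : ∀ s : Finset ℕ, 1 - x ^ m / (1 - x) ≤ ∏ i ∈ s, f i := by
    intro s
    have h1 : ∑ i ∈ s, x ^ (m + i) ≤ x ^ m / (1 - x) := by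
      rw [← htsum]
      exact Summable.sum_le_tsum s (fun i _ => (hxn (m + i)).le) hsum
    have h2 := weierstrass_one_sub_sum_le_prod (fun i => x ^ (m + i))
      (fun i => (hxn (m + i)).le) (fun i => hxle (m + i)) s
    simp only [hf]
    linarith
  -- the net of partial products is antitone, bounded below: HasProd
  have hanti : Antitone (fun s : Finset ℕ => ∏ i ∈ s, f i) := by
    intro s t hst
    simp only []
    rw [← Finset.prod_sdiff hst]
    have h1 : ∏ i ∈ t \ s, f i ≤ 1 :=
      Finset.prod_le_one (fun i _ => hf0 i) (fun i _ => hf1 i)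
    have h2 : 0 ≤ ∏ i ∈ s, f i := Finset.prod_nonneg fun i _ => hf0 i
    nlinarith [Finset.prod_nonneg (fun i (_ : i ∈ t \ s) => hf0 i)]
  have hbdd : BddBelow (Set.range fun s : Finset ℕ => ∏ i ∈ s, f i) :=
    ⟨1 - x ^ m / (1 - x), by rintro _ ⟨s, rfl⟩; exact key s⟩
  have hglb : IsGLB (Set.range fun s : Finset ℕ => ∏ i ∈ s, f i)
      (sInf (Set.range fun s : Finset ℕ => ∏ i ∈ s, f i)) :=
    isGLB_csInf ⟨_, ⟨∅, rfl⟩⟩ hbdd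
  have hprod : HasProd f (sInf (Set.range fun s : Finset ℕ => ∏ i ∈ s, f i)) :=
    tendsto_atTop_isGLB hanti hglb
  rw [hprod.tprod_eq]
  exact le_csInf ⟨_, ⟨∅, rfl⟩⟩ (by rintro _ ⟨s, rfl⟩; exact key s)

theorem tail_product_key_estimate (x : ℝ) (hx0 : 0 < x) (hx2 : x ≤ 1 / 2)
    (n : ℕ) (hn : 1 ≤ n) (k : ℕ) (hk : 1 ≤ k) :
    (1 - x ^ n ≤ ∏' i : ℕ, (1 - x ^ (n + k + i)))
    ∧ 1 - x ^ n ≤ 1 - x ^ (n + 1) / (1 - x)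
    ∧ 1 - x ^ (n + 1) / (1 - x) ≤ ∏' i : ℕ, (1 - x ^ (n + 1 + i)) := by
  have hx1 : x < 1 := by linarith
  have h1x : (0:ℝ) < 1 - x := by linarith
  have hxn : 0 < x ^ n := pow_pos hx0 n
  have hxk : x ^ k ≤ 1 / 2 := by
    calc x ^ k ≤ x ^ 1 := pow_le_pow_of_le_one hx0.le hx1.le hk
    _ = x := pow_one x
    _ ≤ 1 / 2 := hx2
  refine ⟨?_, ?_, tail_prod_ge x hx0 hx1 (n + 1)⟩
  · refine le_trans ?_ (tail_prod_ge x hx0 hx1 (n + k))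
    have : x ^ (n + k) / (1 - x) ≤ x ^ n := by
      rw [div_le_iff₀ h1x, pow_add]
      nlinarith
    linarith
  · have : x ^ (n + 1) / (1 - x) ≤ x ^ n := by
      rw [div_le_iff₀ h1x, pow_add]
      nlinarith
    linarith
end

section
/- Let X be a ℤ-valued random variable with unimodal distribution, and let U be independent of X with P(U=1) = p = 1 − P(U=0). Then d_TV(X, X+U) = p · sup_{k∈ℤ} P(X=k). -/
open MeasureTheory ProbabilityTheory

private lemma range_sub_nat' (k₀ : ℤ) : Set.range (fun n : ℕ => k₀ - (n : ℤ)) = Set.Iic k₀ := by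
  ext k
  simp only [Set.mem_range, Set.mem_Iic]
  constructor
  · rintro ⟨n, rfl⟩; omega
  · intro h; exact ⟨(k₀ - k).toNat, by omega⟩

private lemma range_add_nat' (k₀ : ℤ) :
    Set.range (fun n : ℕ => k₀ + 1 + (n : ℤ)) = Set.Ioi k₀ := by
  ext k
  simp only [Set.mem_range, Set.mem_Ioi]
  constructor
  · rintro ⟨n, rfl⟩; omega
  · intro h; exact ⟨(k - k₀ - 1).toNat, by omega⟩

theorem dTV_unimodal_plus_bernoulli {Ω : Type*} [MeasurableSpace Ω] (P : Measure Ω)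
    [IsProbabilityMeasure P] (X : Ω → ℤ) (hX : Measurable X)
    (huni : ∃ k₀ : ℤ, (∀ i < k₀, P {ω | X ω = i} ≤ P {ω | X ω = i + 1})
      ∧ (∀ i, k₀ ≤ i → P {ω | X ω = i + 1} ≤ P {ω | X ω = i}))
    (U : Ω → ℤ) (hU : Measurable U) (hindep : IndepFun X U P)
    (p : ℝ) (hp0 : 0 ≤ p) (hp1 : p ≤ 1)
    (hU1 : P {ω | U ω = 1} = ENNReal.ofReal p)
    (hU0 : P {ω | U ω = 0} = ENNReal.ofReal (1 - p)) :
    (⨆ B : Set ℤ, |(P {ω | X ω ∈ B}).toReal - (P {ω | X ω + U ω ∈ B}).toReal|)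
      = p * ⨆ k : ℤ, (P {ω | X ω = k}).toReal := by
  classical
  obtain ⟨k₀, hup, hdown⟩ := huni
  set f : ℤ → ℝ := fun k => (P {ω | X ω = k}).toReal with hf_def
  have hf_nonneg : ∀ k, 0 ≤ f k := fun k => ENNReal.toReal_nonneg
  -- measure of {X ∈ B} as a tsum
  have hPB : ∀ B : Set ℤ, P {ω | X ω ∈ B} = ∑' k : B, P {ω | X ω = (k : ℤ)} := by
    intro B
    have h1 : (∑' b : B, P (X ⁻¹' {(b : ℤ)})) = P (X ⁻¹' B) :=
      tsum_measure_preimage_singleton (μ := P) (Set.to_countable B)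
        (fun y _ => hX (measurableSet_singleton y))
    have h2 : ∀ k : ℤ, X ⁻¹' {k} = {ω | X ω = k} := by
      intro k; ext ω; simp [Set.mem_preimage]
    have h3 : X ⁻¹' B = {ω | X ω ∈ B} := rfl
    rw [← h3, ← h1]
    exact tsum_congr fun b => by rw [h2]
  have hPBr : ∀ B : Set ℤ, (P {ω | X ω ∈ B}).toReal = ∑' k, B.indicator f k := by
    intro B
    rw [hPB B, ENNReal.tsum_toReal_eq (fun _ => measure_ne_top P _), ← tsum_subtype]
  -- summability of f
  have hf_sum : Summable f := by
    apply ENNReal.summable_toReal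
    have h := hPB Set.univ
    have h2 : (∑' k : (Set.univ : Set ℤ), P {ω | X ω = (k : ℤ)})
        = ∑' k : ℤ, P {ω | X ω = k} := tsum_univ (fun k : ℤ => P {ω | X ω = k})
    rw [h2] at h
    rw [← h]
    exact measure_ne_top P _
  have hf_sum1 : Summable (fun k : ℤ => f (k - 1)) := by
    have hinj : Function.Injective (fun k : ℤ => k - 1) := fun a b hab => by
      simpa using hab
    exact hf_sum.comp_injective hinj
  set h : ℤ → ℝ := fun k => f k - f (k - 1) with hh_def
  have hh_sum : Summable h := hf_sum.sub hf_sum1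
  -- monotonicity in real form
  have key_le : ∀ i < k₀, f i ≤ f (i + 1) := fun i hi =>
    ENNReal.toReal_mono (measure_ne_top P _) (hup i hi)
  have key_ge : ∀ i, k₀ ≤ i → f (i + 1) ≤ f i := fun i hi =>
    ENNReal.toReal_mono (measure_ne_top P _) (hdown i hi)
  have hh_nonneg : ∀ k ≤ k₀, 0 ≤ h k := by
    intro k hk
    have := key_le (k - 1) (by omega)
    have hk1 : k - 1 + 1 = k := by ring
    rw [hk1] at this
    simp only [hh_def]; linarith
  have hh_nonpos : ∀ k, k₀ < k → h k ≤ 0 := by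
    intro k hk
    have := key_ge (k - 1) (by omega)
    have hk1 : k - 1 + 1 = k := by ring
    rw [hk1] at this
    simp only [hh_def]; linarith
  -- telescoping sums
  have hGs : Summable (fun n : ℕ => f (k₀ - n)) :=
    hf_sum.comp_injective (fun a b hab => by omega)
  have hG0 : Filter.Tendsto (fun n : ℕ => f (k₀ - n)) Filter.atTop (nhds 0) :=
    hGs.tendsto_atTop_zero
  have tele1 : HasSum ((Set.Iic k₀).indicator h) (f k₀) := by
    set G : ℕ → ℝ := fun n => f (k₀ - n) with hG_def
    have hG1 : Summable (fun n => G (n + 1)) := (summable_nat_add_iff 1).mpr hGs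
    have hsum : Summable (fun n => G n - G (n + 1)) := hGs.sub hG1
    have hHS : HasSum (fun n => G n - G (n + 1)) (G 0) := by
      rw [Summable.hasSum_iff_tendsto_nat hsum]
      have heq : ∀ n, ∑ i ∈ Finset.range n, (G i - G (i + 1)) = G 0 - G n :=
        fun n => Finset.sum_range_sub' G n
      simp only [heq]
      have := Filter.Tendsto.sub (tendsto_const_nhds (x := G 0)) hG0
      simpa using this
    have hinj : Function.Injective (fun n : ℕ => k₀ - (n : ℤ)) := fun a b hab => by
      simp only at hab; omega
    have hHS2 : HasSum ((Set.Iic k₀).indicator h) (G 0) := by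
      apply (Function.Injective.hasSum_iff hinj ?_).mp ?_
      · intro x hx
        rw [range_sub_nat'] at hx
        exact Set.indicator_of_notMem hx h
      · convert hHS using 1
        funext n
        show (Set.Iic k₀).indicator h (k₀ - n) = G n - G (n + 1)
        rw [Set.indicator_of_mem (by simp : (k₀ - (n : ℤ)) ∈ Set.Iic k₀)]
        show f (k₀ - n) - f (k₀ - n - 1) = G n - G (n + 1)
        have : (k₀ : ℤ) - (n : ℤ) - 1 = k₀ - ((n : ℕ) + 1 : ℕ) := by push_cast; ring
        simp only [hG_def, this]
    have : G 0 = f k₀ := by simp [hG_def]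
    rwa [this] at hHS2
  have hGs' : Summable (fun n : ℕ => f (k₀ + n)) :=
    hf_sum.comp_injective (fun a b hab => by omega)
  have hG0' : Filter.Tendsto (fun n : ℕ => f (k₀ + n)) Filter.atTop (nhds 0) :=
    hGs'.tendsto_atTop_zero
  have tele2 : HasSum ((Set.Ioi k₀).indicator h) (-(f k₀)) := by
    set G : ℕ → ℝ := fun n => f (k₀ + n) with hG_def
    have hG1 : Summable (fun n => G (n + 1)) := (summable_nat_add_iff 1).mpr hGs'
    have hsum : Summable (fun n => G (n + 1) - G n) := hG1.sub hGs'
    have hHS : HasSum (fun n => G (n + 1) - G n) (-(G 0)) := by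
      rw [Summable.hasSum_iff_tendsto_nat hsum]
      have heq : ∀ n, ∑ i ∈ Finset.range n, (G (i + 1) - G i) = G n - G 0 :=
        fun n => Finset.sum_range_sub G n
      simp only [heq]
      have := Filter.Tendsto.sub hG0' (tendsto_const_nhds (x := G 0))
      simpa using this
    have hinj : Function.Injective (fun n : ℕ => k₀ + 1 + (n : ℤ)) := fun a b hab => by
      simp only at hab; omega
    have hHS2 : HasSum ((Set.Ioi k₀).indicator h) (-(G 0)) := by
      apply (Function.Injective.hasSum_iff hinj ?_).mp ?_
      · intro x hx
        rw [range_add_nat'] at hx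
        exact Set.indicator_of_notMem hx h
      · convert hHS using 1
        funext n
        show (Set.Ioi k₀).indicator h (k₀ + 1 + n) = G (n + 1) - G n
        rw [Set.indicator_of_mem (by simp [Set.mem_Ioi]; omega : (k₀ + 1 + (n : ℤ)) ∈ Set.Ioi k₀)]
        show f (k₀ + 1 + n) - f (k₀ + 1 + n - 1) = G (n + 1) - G n
        have e1 : (k₀ : ℤ) + 1 + (n : ℤ) = k₀ + ((n : ℕ) + 1 : ℕ) := by push_cast; ring
        have e2 : (k₀ : ℤ) + 1 + (n : ℤ) - 1 = k₀ + (n : ℤ) := by ring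
        simp only [hG_def, e1, e2]
        have e3 : k₀ + ((n : ℕ) + 1 : ℕ) - 1 = k₀ + (n : ℤ) := by push_cast; ring
        rw [e3]
    have : G 0 = f k₀ := by simp [hG_def]
    rwa [this] at hHS2
  -- the key bound
  have hS_bound : ∀ B : Set ℤ, |∑' k, B.indicator h k| ≤ f k₀ := by
    intro B
    rw [abs_le]
    constructor
    · rw [← tele2.tsum_eq]
      apply Summable.tsum_le_tsum _ (hh_sum.indicator _) (hh_sum.indicator _)
      intro k
      simp only [Set.indicator_apply, Set.mem_Ioi]
      split_ifs with h1 h2 h2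
      · exact le_rfl
      · exact hh_nonpos k h1
      · exact hh_nonneg k (by omega)
      · exact le_rfl
    · rw [← tele1.tsum_eq]
      apply Summable.tsum_le_tsum _ (hh_sum.indicator _) (hh_sum.indicator _)
      intro k
      simp only [Set.indicator_apply, Set.mem_Iic]
      split_ifs with h1 h2 h2
      · exact le_rfl
      · exact hh_nonpos k (by omega)
      · exact hh_nonneg k h2
      · exact le_rfl
  -- law of X + U
  have hmeas01 : MeasurableSet (U ⁻¹' {0} ∪ U ⁻¹' {1}) :=
    (hU (measurableSet_singleton 0)).union (hU (measurableSet_singleton 1))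
  have hP01 : P (U ⁻¹' {0} ∪ U ⁻¹' {1}) = 1 := by
    rw [measure_union (by
        rw [Set.disjoint_left]
        intro ω h0 h1
        simp only [Set.mem_preimage, Set.mem_singleton_iff] at h0 h1
        omega) (hU (measurableSet_singleton 1))]
    have e0 : U ⁻¹' {0} = {ω | U ω = 0} := by ext ω; simp
    have e1 : U ⁻¹' {1} = {ω | U ω = 1} := by ext ω; simp
    rw [e0, e1, hU0, hU1, ← ENNReal.ofReal_add (by linarith) hp0]
    norm_num
  have hRest : P ((U ⁻¹' {0} ∪ U ⁻¹' {1})ᶜ) = 0 := by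
    rw [measure_compl hmeas01 (measure_ne_top P _), hP01, measure_univ, tsub_self]
  have hnu : ∀ B : Set ℤ, P {ω | X ω + U ω ∈ B}
      = ENNReal.ofReal (1 - p) * P {ω | X ω ∈ B}
        + ENNReal.ofReal p * P {ω | X ω + 1 ∈ B} := by
    intro B
    set E : Set Ω := {ω | X ω + U ω ∈ B} with hE_def
    have hEmeas : MeasurableSet E := (hX.add hU) (MeasurableSet.of_discrete (s := B))
    have hdisj : Disjoint (E ∩ U ⁻¹' {0}) (E ∩ U ⁻¹' {1}) := by
      rw [Set.disjoint_left]
      rintro ω ⟨-, h0⟩ ⟨-, h1⟩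
      simp only [Set.mem_preimage, Set.mem_singleton_iff] at h0 h1
      omega
    have hsplit : P E = P (E ∩ U ⁻¹' {0}) + P (E ∩ U ⁻¹' {1}) := by
      apply le_antisymm
      · calc P E = P (E ∩ (U ⁻¹' {0} ∪ U ⁻¹' {1}) ∪ E ∩ (U ⁻¹' {0} ∪ U ⁻¹' {1})ᶜ) := by
              rw [Set.inter_union_compl]
          _ ≤ P (E ∩ (U ⁻¹' {0} ∪ U ⁻¹' {1})) + P (E ∩ (U ⁻¹' {0} ∪ U ⁻¹' {1})ᶜ) :=
              measure_union_le _ _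
          _ ≤ P (E ∩ U ⁻¹' {0} ∪ E ∩ U ⁻¹' {1}) + 0 := by
              rw [Set.inter_union_distrib_left]
              exact add_le_add le_rfl
                ((measure_mono Set.inter_subset_right).trans hRest.le)
          _ ≤ P (E ∩ U ⁻¹' {0}) + P (E ∩ U ⁻¹' {1}) := by
              rw [add_zero]; exact measure_union_le _ _
      · rw [← measure_union hdisj (hEmeas.inter (hU (measurableSet_singleton 1)))]
        exact measure_mono (Set.union_subset Set.inter_subset_left Set.inter_subset_left)
    have h0 : E ∩ U ⁻¹' {0} = X ⁻¹' B ∩ U ⁻¹' {0} := by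
      ext ω
      simp only [hE_def, Set.mem_inter_iff, Set.mem_setOf_eq, Set.mem_preimage,
        Set.mem_singleton_iff]
      constructor
      · rintro ⟨h1, h2⟩; rw [h2, add_zero] at h1; exact ⟨h1, h2⟩
      · rintro ⟨h1, h2⟩; rw [h2, add_zero]; exact ⟨h1, rfl⟩
    have h1 : E ∩ U ⁻¹' {1} = X ⁻¹' ((· + 1) ⁻¹' B) ∩ U ⁻¹' {1} := by
      ext ω
      simp only [hE_def, Set.mem_inter_iff, Set.mem_setOf_eq, Set.mem_preimage,
        Set.mem_singleton_iff]
      constructor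
      · rintro ⟨ha, hb⟩; rw [hb] at ha; exact ⟨ha, hb⟩
      · rintro ⟨ha, hb⟩; rw [hb]; exact ⟨ha, rfl⟩
    rw [hsplit, h0, h1,
      hindep.measure_inter_preimage_eq_mul B {0} MeasurableSet.of_discrete
        (measurableSet_singleton 0),
      hindep.measure_inter_preimage_eq_mul ((· + 1) ⁻¹' B) {1} MeasurableSet.of_discrete
        (measurableSet_singleton 1)]
    have e0 : U ⁻¹' {0} = {ω | U ω = 0} := by ext ω; simp
    have e1 : U ⁻¹' {1} = {ω | U ω = 1} := by ext ω; simp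
    have eX : X ⁻¹' B = {ω | X ω ∈ B} := rfl
    have eX1 : X ⁻¹' ((· + 1) ⁻¹' B) = {ω | X ω + 1 ∈ B} := rfl
    rw [e0, e1, eX, eX1, hU0, hU1, mul_comm, mul_comm (P {ω | X ω + 1 ∈ B})]
  -- the shifted sum
  have hshift : ∀ B : Set ℤ, (P {ω | X ω + 1 ∈ B}).toReal
      = ∑' k, B.indicator (fun j => f (j - 1)) k := by
    intro B
    have e1 : {ω | X ω + 1 ∈ B} = {ω | X ω ∈ (· + 1) ⁻¹' B} := rfl
    rw [e1, hPBr]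
    have e2 : ((· + 1) ⁻¹' B).indicator f
        = fun k => B.indicator (fun j => f (j - 1)) (k + 1) := by
      funext k
      by_cases hk : k + 1 ∈ B
      · rw [Set.indicator_of_mem (by simpa [Set.mem_preimage] using hk),
          Set.indicator_of_mem hk]
        simp
      · rw [Set.indicator_of_notMem (by simpa [Set.mem_preimage] using hk),
          Set.indicator_of_notMem hk]
    rw [e2]
    exact Equiv.tsum_eq (Equiv.addRight (1 : ℤ)) (B.indicator fun j => f (j - 1))
  -- the difference as p * (indicator sum)
  have hD : ∀ B : Set ℤ, (P {ω | X ω ∈ B}).toReal - (P {ω | X ω + U ω ∈ B}).toReal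
      = p * ∑' k, B.indicator h k := by
    intro B
    have hnuB := hnu B
    have htoReal : (P {ω | X ω + U ω ∈ B}).toReal
        = (1 - p) * (P {ω | X ω ∈ B}).toReal + p * (P {ω | X ω + 1 ∈ B}).toReal := by
      rw [hnuB, ENNReal.toReal_add (ENNReal.mul_ne_top ENNReal.ofReal_ne_top
          (measure_ne_top P _)) (ENNReal.mul_ne_top ENNReal.ofReal_ne_top (measure_ne_top P _)),
        ENNReal.toReal_mul, ENNReal.toReal_mul, ENNReal.toReal_ofReal (by linarith),
        ENNReal.toReal_ofReal hp0]
    rw [htoReal, hPBr B, hshift B]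
    have hsub : (∑' k, B.indicator f k) - ∑' k, B.indicator (fun j => f (j - 1)) k
        = ∑' k, B.indicator h k := by
      rw [← Summable.tsum_sub (hf_sum.indicator B) (hf_sum1.indicator B)]
      apply tsum_congr
      intro k
      by_cases hk : k ∈ B
      · rw [Set.indicator_of_mem hk, Set.indicator_of_mem hk, Set.indicator_of_mem hk]
      · rw [Set.indicator_of_notMem hk, Set.indicator_of_notMem hk,
          Set.indicator_of_notMem hk]
        ring
    have := hsub
    nlinarith [hsub]
  -- sup of f is f k₀
  have hf_le : ∀ k, f k ≤ f k₀ := by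
    have hdownn : ∀ n : ℕ, f (k₀ - n) ≤ f k₀ := by
      intro n
      induction n with
      | zero => simp
      | succ m ih =>
        have h1 : f (k₀ - (m + 1 : ℕ)) ≤ f (k₀ - m) := by
          have := key_le (k₀ - m - 1) (by omega)
          have e1 : k₀ - m - 1 + 1 = k₀ - (m : ℤ) := by ring
          have e2 : k₀ - ((m : ℕ) + 1 : ℕ) = k₀ - (m : ℤ) - 1 := by push_cast; ring
          rw [e1] at this
          rw [e2]
          exact this
        linarith
    have hupn : ∀ n : ℕ, f (k₀ + n) ≤ f k₀ := by
      intro n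
      induction n with
      | zero => simp
      | succ m ih =>
        have h1 : f (k₀ + (m + 1 : ℕ)) ≤ f (k₀ + m) := by
          have := key_ge (k₀ + m) (by omega)
          have e2 : k₀ + ((m : ℕ) + 1 : ℕ) = k₀ + (m : ℤ) + 1 := by push_cast; ring
          rw [e2]
          exact this
        linarith
    intro k
    rcases le_or_gt k k₀ with hk | hk
    · have := hdownn (k₀ - k).toNat
      have e : k₀ - ((k₀ - k).toNat : ℤ) = k := by omega
      rwa [e] at this
    · have := hupn (k - k₀).toNat
      have e : k₀ + ((k - k₀).toNat : ℤ) = k := by omega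
      rwa [e] at this
  have hsupf : (⨆ k : ℤ, f k) = f k₀ := by
    apply le_antisymm
    · exact ciSup_le hf_le
    · exact le_ciSup ⟨f k₀, by rintro x ⟨k, rfl⟩; exact hf_le k⟩ k₀
  -- conclude
  have hFbound : ∀ B : Set ℤ,
      |(P {ω | X ω ∈ B}).toReal - (P {ω | X ω + U ω ∈ B}).toReal| ≤ p * f k₀ := by
    intro B
    rw [hD B, abs_mul, abs_of_nonneg hp0]
    exact mul_le_mul_of_nonneg_left (hS_bound B) hp0
  have hFval : |(P {ω | X ω ∈ Set.Iic k₀}).toReal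
      - (P {ω | X ω + U ω ∈ Set.Iic k₀}).toReal| = p * f k₀ := by
    rw [hD (Set.Iic k₀), tele1.tsum_eq, abs_mul, abs_of_nonneg hp0,
      abs_of_nonneg (hf_nonneg k₀)]
  rw [hsupf]
  apply le_antisymm
  · exact ciSup_le hFbound
  · rw [← hFval]
    exact le_ciSup ⟨p * f k₀, by rintro x ⟨B, rfl⟩; exact hFbound B⟩ (Set.Iic k₀)
end

section
/- Let X be Binomial(n,p) and Y be Binomial(n+1,p) with 0 < p < 1. Then d_TV(X, Y) = p · max_k P(X = k). -/
open MeasureTheory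

namespace DTVBin

/-- Binomial(n,p) pmf. -/
noncomputable def f (n : ℕ) (p : ℝ) (k : ℕ) : ℝ :=
  (n.choose k) * p ^ k * (1 - p) ^ (n - k)

/-- Shifted helper: `F 0 = 0`, `F (k+1) = f k`. -/
noncomputable def F (n : ℕ) (p : ℝ) : ℕ → ℝ
  | 0 => 0
  | (k+1) => f n p k

/-- Successive difference. -/
noncomputable def D (n : ℕ) (p : ℝ) (k : ℕ) : ℝ := F n p (k+1) - F n p k

/-- The mode of Binomial(n,p). -/
noncomputable def m (n : ℕ) (p : ℝ) : ℕ := ⌊(n + 1 : ℝ) * p⌋₊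

lemma f_nonneg (n : ℕ) {p : ℝ} (hp0 : 0 < p) (hp1 : p < 1) (k : ℕ) : 0 ≤ f n p k := by
  have hq : (0:ℝ) < 1 - p := by linarith
  unfold f; positivity

lemma f_zero (n : ℕ) (p : ℝ) {k : ℕ} (hk : n < k) : f n p k = 0 := by
  unfold f
  rw [Nat.choose_eq_zero_of_lt hk]
  simp

lemma sum_range_D (n : ℕ) (p : ℝ) (N : ℕ) :
    ∑ k ∈ Finset.range N, D n p k = F n p N := by
  simp only [D]
  rw [Finset.sum_range_sub (F n p) N]
  simp [F]

lemma D_key (n : ℕ) (p : ℝ) {j : ℕ} (hj : j < n) :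
    ((j:ℝ)+1) * D n p (j+1)
      = n.choose j * p ^ j * (1-p) ^ (n - (j+1)) * (((n:ℝ)+1)*p - ((j:ℝ)+1)) := by
  have hc : ((n.choose (j+1) : ℝ)) * ((j:ℝ)+1) = (n.choose j) * ((n:ℝ) - j) := by
    have h := Nat.choose_succ_right_eq n j
    have h2 := congrArg (fun x : ℕ => (x : ℝ)) h
    push_cast [Nat.cast_sub hj.le] at h2
    linarith
  have h1 : n - j = (n - (j+1)) + 1 := by omega
  simp only [D, F, f]
  rw [h1]
  linear_combination (p^(j+1) * (1-p)^(n-(j+1))) * hc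

lemma m_le (n : ℕ) {p : ℝ} (hp0 : 0 < p) (hp1 : p < 1) : m n p ≤ n := by
  have h : ((n:ℝ) + 1) * p < (n:ℝ) + 1 := by nlinarith
  have h2 : ⌊((n:ℝ)+1) * p⌋₊ < n + 1 := by
    rw [Nat.floor_lt (by positivity)]
    push_cast
    linarith
  have : m n p < n + 1 := h2
  omega

lemma D_nonneg (n : ℕ) {p : ℝ} (hp0 : 0 < p) (hp1 : p < 1) {k : ℕ} (hk : k ≤ m n p) :
    0 ≤ D n p k := by
  have hq : (0:ℝ) < 1 - p := by linarith
  cases k with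
  | zero =>
      simp only [D, F, f, sub_zero]
      positivity
  | succ j =>
      have hjn : j < n := by have := m_le n hp0 hp1; omega
      have hfloor : ((j:ℝ)+1) ≤ ((n:ℝ)+1) * p := by
        have h1 : ((m n p : ℝ)) ≤ ((n:ℝ)+1) * p := by
          exact Nat.floor_le (by positivity : (0:ℝ) ≤ ((n:ℝ)+1)*p)
        have h2 : ((j:ℝ)+1) ≤ (m n p : ℝ) := by exact_mod_cast hk
        linarith
      have hkey := D_key n p hjn
      have hpos : (0:ℝ) ≤ (n.choose j : ℝ) * p ^ j * (1-p) ^ (n - (j+1)) := by positivity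
      nlinarith [hkey]

lemma D_nonpos (n : ℕ) {p : ℝ} (hp0 : 0 < p) (hp1 : p < 1) {k : ℕ} (hk : m n p < k) :
    D n p k ≤ 0 := by
  have hq : (0:ℝ) < 1 - p := by linarith
  match k, hk with
  | (j+1), hk =>
    rcases lt_trichotomy j n with hjn | hjn | hjn
    · have hfloor : ((n:ℝ)+1) * p < ((j:ℝ)+1) := by
        have h1 : ((n:ℝ)+1) * p < (m n p : ℝ) + 1 := by
          exact Nat.lt_floor_add_one (((n:ℝ)+1)*p)
        have h2 : ((m n p:ℝ)) + 1 ≤ ((j:ℝ)+1) := by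
          have h3 : m n p + 1 ≤ j + 1 := hk
          exact_mod_cast h3
        linarith
      have hkey := D_key n p hjn
      have hpos : (0:ℝ) ≤ (n.choose j : ℝ) * p ^ j * (1-p) ^ (n - (j+1)) := by positivity
      nlinarith [hkey]
    · have h0 : D n p (j+1) = f n p (j+1) - f n p j := rfl
      rw [h0, f_zero n p (by omega : n < j + 1)]
      have := f_nonneg n hp0 hp1 j
      linarith
    · have h1 : f n p (j+1) = 0 := f_zero n p (by omega)
      have h2 : f n p j = 0 := f_zero n p (by omega)
      have h0 : D n p (j+1) = f n p (j+1) - f n p j := rfl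
      rw [h0, h1, h2]
      simp

lemma f_le_f_m (n : ℕ) {p : ℝ} (hp0 : 0 < p) (hp1 : p < 1) (j : ℕ) :
    f n p j ≤ f n p (m n p) := by
  classical
  have hj1 : f n p j = ∑ k ∈ Finset.range (j+1), D n p k := (sum_range_D n p (j+1)).symm
  have hm1 : f n p (m n p) = ∑ k ∈ Finset.range (m n p + 1), D n p k :=
    (sum_range_D n p (m n p + 1)).symm
  rcases le_or_gt j (m n p) with h | h
  · rw [hj1, hm1]
    apply Finset.sum_le_sum_of_subset_of_nonneg
    · exact Finset.range_subset_range.2 (by omega)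
    · intro i hi _
      exact D_nonneg n hp0 hp1 (Nat.lt_succ_iff.mp (Finset.mem_range.mp hi))
  · rw [hj1, hm1]
    have hsub : Finset.range (m n p + 1) ⊆ Finset.range (j+1) := Finset.range_subset_range.2 (by omega)
    have hsd := Finset.sum_sdiff (f := D n p) hsub
    have hneg : ∑ k ∈ Finset.range (j+1) \ Finset.range (m n p + 1), D n p k ≤ 0 := by
      apply Finset.sum_nonpos
      intro i hi
      simp only [Finset.mem_sdiff, Finset.mem_range] at hi
      exact D_nonpos n hp0 hp1 (by omega)
    linarith

/-- The key bound on partial sums of `D`. -/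
lemma abs_sum_D_le (n : ℕ) {p : ℝ} (hp0 : 0 < p) (hp1 : p < 1) (T : Finset ℕ)
    (hT : T ⊆ Finset.range (n+2)) :
    |∑ k ∈ T, D n p k| ≤ f n p (m n p) := by
  classical
  set mm := m n p with hmm
  have hmn : mm ≤ n := m_le n hp0 hp1
  have hsplit := Finset.sum_filter_add_sum_filter_not T (fun k => k ≤ mm) (D n p)
  have hub : ∑ k ∈ T, D n p k ≤ f n p mm := by
    have h1 : ∑ k ∈ T.filter (fun k => ¬ k ≤ mm), D n p k ≤ 0 := by
      apply Finset.sum_nonpos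
      intro i hi
      simp only [Finset.mem_filter, not_le] at hi
      exact D_nonpos n hp0 hp1 hi.2
    have h2 : ∑ k ∈ T.filter (fun k => k ≤ mm), D n p k
        ≤ ∑ k ∈ Finset.range (mm+1), D n p k := by
      apply Finset.sum_le_sum_of_subset_of_nonneg
      · intro i hi
        simp only [Finset.mem_filter] at hi
        simp only [Finset.mem_range]; omega
      · intro i hi _
        exact D_nonneg n hp0 hp1 (Nat.lt_succ_iff.mp (Finset.mem_range.mp hi))
    rw [sum_range_D] at h2
    have hF : F n p (mm + 1) = f n p mm := rfl
    rw [hF] at h2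
    linarith
  have hlb : -(f n p mm) ≤ ∑ k ∈ T, D n p k := by
    have h1 : (0:ℝ) ≤ ∑ k ∈ T.filter (fun k => k ≤ mm), D n p k := by
      apply Finset.sum_nonneg
      intro i hi
      simp only [Finset.mem_filter] at hi
      exact D_nonneg n hp0 hp1 hi.2
    have h2 : ∑ k ∈ (Finset.range (n+2)).filter (fun k => ¬ k ≤ mm), D n p k
        ≤ ∑ k ∈ T.filter (fun k => ¬ k ≤ mm), D n p k := by
      have hsub : T.filter (fun k => ¬ k ≤ mm) ⊆ (Finset.range (n+2)).filter (fun k => ¬ k ≤ mm) :=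
        Finset.filter_subset_filter _ hT
      have hsd := Finset.sum_sdiff (f := D n p) hsub
      have hneg : ∑ k ∈ (Finset.range (n+2)).filter (fun k => ¬ k ≤ mm)
            \ T.filter (fun k => ¬ k ≤ mm), D n p k ≤ 0 := by
        apply Finset.sum_nonpos
        intro i hi
        simp only [Finset.mem_sdiff, Finset.mem_filter, not_le] at hi
        exact D_nonpos n hp0 hp1 hi.1.2
      linarith
    have h3 : ∑ k ∈ (Finset.range (n+2)).filter (fun k => ¬ k ≤ mm), D n p k
        = -(f n p mm) := by
      have hfe : (Finset.range (n+2)).filter (fun k => ¬ k ≤ mm)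
          = Finset.range (n+2) \ Finset.range (mm+1) := by
        ext i
        simp only [Finset.mem_filter, Finset.mem_sdiff, Finset.mem_range, not_le]
        omega
      rw [hfe]
      have hsub2 : Finset.range (mm+1) ⊆ Finset.range (n+2) := Finset.range_subset_range.2 (by omega)
      have hsd2 := Finset.sum_sdiff (f := D n p) hsub2
      have e1 : ∑ k ∈ Finset.range (mm+1), D n p k = F n p (mm+1) := sum_range_D n p (mm+1)
      have e2 : ∑ k ∈ Finset.range (n+2), D n p k = F n p (n+2) := sum_range_D n p (n+2)
      have e1' : F n p (mm+1) = f n p mm := rfl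
      have e2' : F n p (n+2) = f n p (n+1) := rfl
      have e3 : f n p (n+1) = 0 := f_zero n p (by omega)
      rw [e1'] at e1
      rw [e2', e3] at e2
      linarith
    linarith
  rw [abs_le]
  exact ⟨hlb, hub⟩

/-- `f k - g k = p * D k` where `g` is the Binomial(n+1,p) pmf. -/
lemma fg (n : ℕ) (p : ℝ) (k : ℕ) :
    f n p k - (((n + 1).choose k) * p ^ k * (1 - p) ^ (n + 1 - k)) = p * D n p k := by
  cases k with
  | zero =>
      simp only [f, F, D, Nat.choose_zero_right, pow_zero, Nat.sub_zero, sub_zero,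
        Nat.cast_one]
      rw [pow_succ]
      ring
  | succ j =>
      rcases lt_trichotomy j n with hjn | hjn | hjn
      · have h1 : n + 1 - (j+1) = (n - (j+1)) + 1 := by omega
        have h2 : n - j = (n - (j+1)) + 1 := by omega
        have hpsc : (n+1).choose (j+1) = n.choose j + n.choose (j+1) := by
          rw [Nat.choose_succ_succ]
        have h0 : D n p (j+1) = f n p (j+1) - f n p j := rfl
        rw [h0]
        simp only [f, hpsc, h1, h2]
        push_cast
        ring
      · have h1 : f n p (j+1) = 0 := f_zero n p (by omega)
        have h2 : (n+1).choose (j+1) = 1 := by rw [hjn]; exact Nat.choose_self _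
        have h3 : n + 1 - (j+1) = 0 := by omega
        have h0 : D n p (j+1) = f n p (j+1) - f n p j := rfl
        rw [h0, h1, h2, h3]
        simp only [f, hjn, Nat.choose_self, Nat.sub_self, pow_zero, Nat.cast_one]
        rw [pow_succ]
        ring
      · have h1 : f n p (j+1) = 0 := f_zero n p (by omega)
        have h2 : f n p j = 0 := f_zero n p (by omega)
        have h3 : (n+1).choose (j+1) = 0 := Nat.choose_eq_zero_of_lt (by omega)
        have h0 : D n p (j+1) = f n p (j+1) - f n p j := rfl
        rw [h0, h1, h2, h3]
        simp

/-- Measure of preimage as a finite sum. -/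
lemma measure_mem_eq {Ω : Type*} [MeasurableSpace Ω] (P : Measure Ω)
    (X : Ω → ℕ) (hX : Measurable X) (h : ℕ → ℝ)
    (hh : ∀ k, 0 ≤ h k) (N : ℕ) (hN : ∀ k, N ≤ k → h k = 0)
    (hXd : ∀ k : ℕ, P {ω | X ω = k} = ENNReal.ofReal (h k)) (B : Set ℕ)
    [DecidablePred (· ∈ B)] :
    (P {ω | X ω ∈ B}).toReal
      = ∑ k ∈ (Finset.range N).filter (· ∈ B), h k := by
  have hset : {ω | X ω ∈ B} = ⋃ k ∈ B, X ⁻¹' {k} := by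
    ext ω; simp
  have hdisj : B.PairwiseDisjoint (fun k => X ⁻¹' {k}) := by
    intro i _ j _ hij
    simp only [Function.onFun]
    apply Set.disjoint_left.mpr
    intro ω h1 h2
    simp only [Set.mem_preimage, Set.mem_singleton_iff] at h1 h2
    exact hij (by omega)
  rw [hset, measure_biUnion B.to_countable hdisj
    (fun k _ => hX (measurableSet_singleton k))]
  have hpre : ∀ k : ℕ, P (X ⁻¹' {k}) = ENNReal.ofReal (h k) := by
    intro k
    have : X ⁻¹' {k} = {ω | X ω = k} := by ext ω; simp
    rw [this, hXd]
  have h1 : ∑' (q : ↑B), P (X ⁻¹' {(q:ℕ)})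
      = ∑' (k : ℕ), B.indicator (fun k => ENNReal.ofReal (h k)) k := by
    rw [← tsum_subtype]
    exact tsum_congr (fun q => hpre q)
  rw [h1]
  rw [tsum_eq_sum (s := (Finset.range N).filter (· ∈ B))
    (by
      intro b hb
      simp only [Finset.mem_filter, Finset.mem_range, not_and_or, not_lt] at hb
      rcases hb with hb | hb
      · rw [Set.indicator_apply]
        split_ifs with hmem
        · rw [hN b hb, ENNReal.ofReal_zero]
        · rfl
      · exact Set.indicator_of_notMem hb _)]
  rw [ENNReal.toReal_sum (by
    intro a _
    rw [Set.indicator_apply]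
    split_ifs <;> simp)]
  apply Finset.sum_congr rfl
  intro k hk
  simp only [Finset.mem_filter] at hk
  rw [Set.indicator_of_mem hk.2, ENNReal.toReal_ofReal (hh k)]

end DTVBin

open DTVBin in
theorem dTV_binomial_shift {Ω : Type*} [MeasurableSpace Ω] (P : Measure Ω)
    [IsProbabilityMeasure P] (n : ℕ) (p : ℝ) (hp0 : 0 < p) (hp1 : p < 1)
    (X Y : Ω → ℕ) (hX : Measurable X) (hY : Measurable Y)
    (hXbin : ∀ k : ℕ, P {ω | X ω = k}
      = ENNReal.ofReal ((n.choose k) * p ^ k * (1 - p) ^ (n - k)))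
    (hYbin : ∀ k : ℕ, P {ω | Y ω = k}
      = ENNReal.ofReal (((n + 1).choose k) * p ^ k * (1 - p) ^ (n + 1 - k))) :
    (⨆ B : Set ℕ, |(P {ω | X ω ∈ B}).toReal - (P {ω | Y ω ∈ B}).toReal|)
      = p * ⨆ k : ℕ, (P {ω | X ω = k}).toReal := by
  classical
  have hq : (0:ℝ) < 1 - p := by linarith
  set g : ℕ → ℝ := fun k => ((n + 1).choose k) * p ^ k * (1 - p) ^ (n + 1 - k) with hg
  have hgnn : ∀ k, 0 ≤ g k := by intro k; simp only [hg]; positivity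
  have hgz : ∀ k, n + 2 ≤ k → g k = 0 := by
    intro k hk
    simp only [hg]
    rw [Nat.choose_eq_zero_of_lt (by omega)]
    simp
  have hfz : ∀ k, n + 2 ≤ k → f n p k = 0 := fun k hk => f_zero n p (by omega)
  have hXB : ∀ B : Set ℕ, (P {ω | X ω ∈ B}).toReal
      = ∑ k ∈ (Finset.range (n+2)).filter (· ∈ B), f n p k :=
    fun B => measure_mem_eq P X hX (f n p) (f_nonneg n hp0 hp1) (n+2) hfz hXbin B
  have hYB : ∀ B : Set ℕ, (P {ω | Y ω ∈ B}).toReal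
      = ∑ k ∈ (Finset.range (n+2)).filter (· ∈ B), g k :=
    fun B => measure_mem_eq P Y hY g hgnn (n+2) hgz hYbin B
  have hdiff : ∀ B : Set ℕ, (P {ω | X ω ∈ B}).toReal - (P {ω | Y ω ∈ B}).toReal
      = p * ∑ k ∈ (Finset.range (n+2)).filter (· ∈ B), D n p k := by
    intro B
    rw [hXB, hYB, ← Finset.sum_sub_distrib, Finset.mul_sum]
    exact Finset.sum_congr rfl (fun k _ => fg n p k)
  have hfm_nonneg : 0 ≤ f n p (m n p) := f_nonneg n hp0 hp1 _
  have hub : ∀ B : Set ℕ,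
      |(P {ω | X ω ∈ B}).toReal - (P {ω | Y ω ∈ B}).toReal| ≤ p * f n p (m n p) := by
    intro B
    rw [hdiff, abs_mul, abs_of_pos hp0]
    exact mul_le_mul_of_nonneg_left
      (abs_sum_D_le n hp0 hp1 _ (Finset.filter_subset _ _)) hp0.le
  set B₀ : Set ℕ := {k : ℕ | k ≤ m n p} with hB₀
  have hach : |(P {ω | X ω ∈ B₀}).toReal - (P {ω | Y ω ∈ B₀}).toReal|
      = p * f n p (m n p) := by
    rw [hdiff]
    have hfe : (Finset.range (n+2)).filter (· ∈ B₀) = Finset.range (m n p + 1) := by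
      ext i
      have := m_le n hp0 hp1
      simp only [Finset.mem_filter, Finset.mem_range, hB₀, Set.mem_setOf_eq]
      omega
    rw [Finset.filter_congr_decidable, hfe, sum_range_D]
    have hF : F n p (m n p + 1) = f n p (m n p) := rfl
    rw [hF, abs_of_nonneg (by positivity)]
  have hsupk : (⨆ k : ℕ, (P {ω | X ω = k}).toReal) = f n p (m n p) := by
    have hval : ∀ k : ℕ, (P {ω | X ω = k}).toReal = f n p k := by
      intro k
      rw [hXbin k]
      exact ENNReal.toReal_ofReal (f_nonneg n hp0 hp1 k)
    apply le_antisymm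
    · apply ciSup_le
      intro k
      rw [hval k]
      exact f_le_f_m n hp0 hp1 k
    · have hbdd : BddAbove (Set.range fun k : ℕ => (P {ω | X ω = k}).toReal) := by
        refine ⟨f n p (m n p), ?_⟩
        rintro x ⟨k, rfl⟩
        simp only [hval k]
        exact f_le_f_m n hp0 hp1 k
      calc f n p (m n p) = (P {ω | X ω = m n p}).toReal := (hval _).symm
        _ ≤ ⨆ k : ℕ, (P {ω | X ω = k}).toReal := le_ciSup hbdd (m n p)
  rw [hsupk]
  apply le_antisymm
  · exact ciSup_le hub
  · have hbdd : BddAbove (Set.range fun B : Set ℕ =>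
        |(P {ω | X ω ∈ B}).toReal - (P {ω | Y ω ∈ B}).toReal|) := by
      refine ⟨p * f n p (m n p), ?_⟩
      rintro x ⟨B, rfl⟩
      exact hub B
    calc p * f n p (m n p)
        = |(P {ω | X ω ∈ B₀}).toReal - (P {ω | Y ω ∈ B₀}).toReal| := hach.symm
      _ ≤ ⨆ B : Set ℕ, |(P {ω | X ω ∈ B}).toReal - (P {ω | Y ω ∈ B}).toReal| :=
          le_ciSup hbdd B₀
end

section
/- Let 0 < x < 1 and let Zᵢ be independent geometric random variables with P(Zᵢ ≥ k) = x^{ik}. Set R_n = ∑_{i>n} Zᵢ. Then P(R_n > 1) ≤ (x^{n+1}/(1−x))². -/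
open MeasureTheory ProbabilityTheory Filter

/-! If `R_n ≥ 2`, then either some `Z_i` with `i > n` is at least `2`, or two distinct such `Z_i`,
`Z_j` are at least `1`. For a pair `(i, j)` the corresponding event has probability `x^(i+j)`
(off the diagonal by independence), so a union bound over ordered pairs gives
`(∑_{i>n} x^i)² = (x^(n+1)/(1-x))²`. -/

lemma Finset.exists_pair_of_two_le_sum {ι : Type*} [DecidableEq ι] (s : Finset ι) (f : ι → ℕ)
    (h : 2 ≤ ∑ i ∈ s, f i) :
    ∃ i ∈ s, ∃ j ∈ s, if i = j then 2 ≤ f i else 1 ≤ f i ∧ 1 ≤ f j := by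
  by_cases hbig : ∃ i ∈ s, 2 ≤ f i
  · obtain ⟨i, hi, h2⟩ := hbig
    exact ⟨i, hi, i, hi, by simpa using h2⟩
  push Not at hbig
  have hcard : 1 < (s.filter (1 ≤ f ·)).card := calc
    1 < ∑ i ∈ s, f i := h
    _ = ∑ i ∈ s with 1 ≤ f i, f i := (Finset.sum_filter_of_ne fun i _ hi => by omega).symm
    _ ≤ ∑ i ∈ s with 1 ≤ f i, 1 :=
        Finset.sum_le_sum fun i hi => Nat.le_of_lt_succ (hbig i (Finset.mem_filter.1 hi).1)
    _ = (s.filter (1 ≤ f ·)).card := by simp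
  obtain ⟨i, hi, j, hj, hij⟩ := Finset.one_lt_card.1 hcard
  rw [Finset.mem_filter] at hi hj
  exact ⟨i, hi.1, j, hj.1, by simp [hij, hi.2, hj.2]⟩

section PairEvent

variable {Ω : Type*}

def pairEvent (Z : ℕ → Ω → ℕ) (i j : ℕ) : Set Ω :=
  {ω | if i = j then 2 ≤ Z i ω else 1 ≤ Z i ω ∧ 1 ≤ Z j ω}

lemma setOf_two_le_sum_subset_iUnion_pairEvent (Z : ℕ → Ω → ℕ) (m N : ℕ) :
    {ω | 2 ≤ ∑ i ∈ Finset.Icc m N, Z i ω} ⊆ ⋃ p : ℕ × ℕ, pairEvent Z (m + p.1) (m + p.2) := by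
  intro ω hω
  obtain ⟨i, hi, j, hj, hij⟩ := Finset.exists_pair_of_two_le_sum _ (Z · ω) hω
  rw [Finset.mem_Icc] at hi hj
  refine Set.mem_iUnion.2 ⟨(i - m, j - m), ?_⟩
  simpa [pairEvent, Nat.add_sub_cancel' hi.1, Nat.add_sub_cancel' hj.1] using hij

variable [MeasurableSpace Ω] {P : Measure Ω} {Z : ℕ → Ω → ℕ} {x : ℝ}

lemma measure_pairEvent (hx0 : 0 ≤ x) (hindep : iIndepFun Z P)
    (hgeom : ∀ i, 1 ≤ i → ∀ k : ℕ, P {ω | k ≤ Z i ω} = ENNReal.ofReal (x ^ (i * k)))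
    {i j : ℕ} (hi : 1 ≤ i) (hj : 1 ≤ j) :
    P (pairEvent Z i j) = ENNReal.ofReal (x ^ i) * ENNReal.ofReal (x ^ j) := by
  by_cases hij : i = j
  · subst hij
    have hdiag : pairEvent Z i i = {ω | 2 ≤ Z i ω} := by simp [pairEvent]
    rw [hdiag, hgeom i hi 2, ← ENNReal.ofReal_mul (by positivity), ← pow_add, mul_two]
  · have hpre : pairEvent Z i j = Z i ⁻¹' Set.Ici 1 ∩ Z j ⁻¹' Set.Ici 1 := by
      ext ω; simp [pairEvent, hij]
    rw [hpre, (hindep.indepFun hij).measure_inter_preimage_eq_mul _ _ measurableSet_Ici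
      measurableSet_Ici]
    change P {ω | 1 ≤ Z i ω} * P {ω | 1 ≤ Z j ω} = _
    rw [hgeom i hi 1, hgeom j hj 1, mul_one, mul_one]

end PairEvent

lemma tsum_ofReal_pow_add {x : ℝ} (hx0 : 0 ≤ x) (hx1 : x < 1) (m : ℕ) :
    ∑' i : ℕ, ENNReal.ofReal (x ^ (m + i)) = ENNReal.ofReal (x ^ m / (1 - x)) := by
  have hsum : Summable fun i : ℕ => x ^ (m + i) := by
    simpa only [pow_add] using (summable_geometric_of_lt_one hx0 hx1).mul_left (x ^ m)
  rw [← ENNReal.ofReal_tsum_of_nonneg (fun i => by positivity) hsum]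
  simp only [pow_add, tsum_mul_left, tsum_geometric_of_lt_one hx0 hx1, div_eq_mul_inv]

lemma tsum_prod_ofReal_pow_add {x : ℝ} (hx0 : 0 ≤ x) (hx1 : x < 1) (m : ℕ) :
    ∑' p : ℕ × ℕ, ENNReal.ofReal (x ^ (m + p.1)) * ENNReal.ofReal (x ^ (m + p.2))
      = ENNReal.ofReal ((x ^ m / (1 - x)) ^ 2) := by
  rw [ENNReal.tsum_prod', sq, ENNReal.ofReal_mul (div_nonneg (by positivity) (by linarith)),
    ← tsum_ofReal_pow_add hx0 hx1, ← ENNReal.tsum_mul_right]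
  simp only [ENNReal.tsum_mul_left]

theorem Rn_tail_bound_general {Ω : Type*} [MeasurableSpace Ω] (P : Measure Ω)
    (x : ℝ) (hx0 : 0 < x) (hx1 : x < 1)
    (Z : ℕ → Ω → ℕ) (hindep : iIndepFun Z P)
    (hgeom : ∀ i, 1 ≤ i → ∀ k : ℕ, P {ω | k ≤ Z i ω} = ENNReal.ofReal (x ^ (i * k)))
    (n : ℕ) (R : Ω → ℕ)
    (hR : ∀ᵐ ω ∂P, ∀ᶠ N in atTop, R ω = ∑ i ∈ Finset.Icc (n + 1) N, Z i ω) :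
    P {ω | 1 < R ω} ≤ ENNReal.ofReal ((x ^ (n + 1) / (1 - x)) ^ 2) := by
  have hcover : {ω | 1 < R ω} ≤ᶠ[ae P] ⋃ p : ℕ × ℕ, pairEvent Z (n + 1 + p.1) (n + 1 + p.2) := by
    filter_upwards [hR] with ω hω hRω
    obtain ⟨N, hN⟩ := hω.exists
    exact setOf_two_le_sum_subset_iUnion_pairEvent Z (n + 1) N (show 2 ≤ _ from hN ▸ hRω)
  calc P {ω | 1 < R ω} ≤ P (⋃ p : ℕ × ℕ, pairEvent Z (n + 1 + p.1) (n + 1 + p.2)) :=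
        measure_mono_ae hcover
    _ ≤ ∑' p : ℕ × ℕ, P (pairEvent Z (n + 1 + p.1) (n + 1 + p.2)) := measure_iUnion_le _
    _ = ∑' p : ℕ × ℕ,
          ENNReal.ofReal (x ^ (n + 1 + p.1)) * ENNReal.ofReal (x ^ (n + 1 + p.2)) := by
        congr 1 with p
        exact measure_pairEvent hx0.le hindep hgeom (by omega) (by omega)
    _ = ENNReal.ofReal ((x ^ (n + 1) / (1 - x)) ^ 2) := tsum_prod_ofReal_pow_add hx0.le hx1 _

theorem Rn_tail_bound {Ω : Type*} [MeasurableSpace Ω] (P : Measure Ω)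
    [IsProbabilityMeasure P] (x : ℝ) (hx0 : 0 < x) (hx1 : x < 1)
    (Z : ℕ → Ω → ℕ) (hmeas : ∀ i, Measurable (Z i))
    (hindep : iIndepFun Z P)
    (hgeom : ∀ i, 1 ≤ i → ∀ k : ℕ, P {ω | k ≤ Z i ω} = ENNReal.ofReal (x ^ (i * k)))
    (n : ℕ) (hn : 1 ≤ n)
    (R : Ω → ℕ) (hRmeas : Measurable R)
    (hR : ∀ᵐ ω ∂P, ∀ᶠ N in atTop, R ω = ∑ i ∈ Finset.Icc (n + 1) N, Z i ω) :
    P {ω | 1 < R ω} ≤ ENNReal.ofReal ((x ^ (n + 1) / (1 - x)) ^ 2) :=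
  Rn_tail_bound_general P x hx0 hx1 Z hindep hgeom n R hR
end

section
/- For 0 < x < 1 and all integers n ≥ 0, t, k with the expressions defined, P(Xⁿ_t = k) = P(X^{(n+t)}_{−t} = t+k), i.e., Xⁿ_t has the same distribution as X^{(n+t)}_{−t} − t (a reflection/transpose symmetry). -/
/-!
Conditioning on the last delay, `X^{n+1}_t = min (n + 1, X^n_{t - Z (n+1)})`, so the law of the
countdown obeys a convolution recursion in `n`. Writing `b = n - k` and `M = t + k`, that recursion
is solved by `x^{kM} (x;x)_{b+M} (x;x)_{b+k} / ((x;x)_b (x;x)_k (x;x)_M)` (a q-Pascal identity).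
This mass is symmetric in `k` and `M`, and swapping them is exactly the reflection
`(n, t, k) ↦ (n + t, -t, t + k)`.
-/

open MeasureTheory ProbabilityTheory

noncomputable def countdown {Ω : Type*} (Z : ℕ → Ω → ℕ) (n : ℕ) (t : ℤ) (ω : Ω) : ℕ :=
  sInf {k : ℕ | ((∑ i ∈ Finset.Icc (k + 1) n, Z i ω : ℕ) : ℤ) ≤ t + k}

open Finset

noncomputable section

/-- The q-Pochhammer symbol `(x; x)_m`. -/
def qPochhammer (x : ℝ) (m : ℕ) : ℝ := ∏ i ∈ range m, (1 - x ^ (i + 1))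

/-- `countdownMass x (n - k) k (t + k)` is `P (Xⁿ_t = k)`. -/
def countdownMass (x : ℝ) (b k M : ℕ) : ℝ :=
  x ^ (k * M) * (qPochhammer x (b + M) * qPochhammer x (b + k)) /
    (qPochhammer x b * qPochhammer x k * qPochhammer x M)

end

section Algebra

variable {x : ℝ}

lemma qPochhammer_zero (x : ℝ) : qPochhammer x 0 = 1 := prod_range_zero _

lemma qPochhammer_succ (x : ℝ) (m : ℕ) :
    qPochhammer x (m + 1) = qPochhammer x m * (1 - x ^ (m + 1)) :=
  prod_range_succ _ _

lemma one_sub_pow_succ_pos (hx0 : 0 ≤ x) (hx1 : x < 1) (m : ℕ) : 0 < 1 - x ^ (m + 1) :=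
  sub_pos.2 (pow_lt_one₀ hx0 hx1 m.succ_ne_zero)

lemma qPochhammer_pos (hx0 : 0 ≤ x) (hx1 : x < 1) (m : ℕ) : 0 < qPochhammer x m :=
  prod_pos fun i _ ↦ one_sub_pow_succ_pos hx0 hx1 i

lemma qPochhammer_ne_zero (hx0 : 0 ≤ x) (hx1 : x < 1) (m : ℕ) : qPochhammer x m ≠ 0 :=
  (qPochhammer_pos hx0 hx1 m).ne'

lemma countdownMass_comm (x : ℝ) (b k M : ℕ) : countdownMass x b k M = countdownMass x b M k := by
  unfold countdownMass
  ring_nf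

lemma countdownMass_nonneg (hx0 : 0 ≤ x) (hx1 : x < 1) (b k M : ℕ) :
    0 ≤ countdownMass x b k M := by
  have h := fun m ↦ (qPochhammer_pos hx0 hx1 m).le
  unfold countdownMass
  exact div_nonneg (mul_nonneg (pow_nonneg hx0 _) (mul_nonneg (h _) (h _)))
    (mul_nonneg (mul_nonneg (h _) (h _)) (h _))

lemma countdownMass_zero_left (hx0 : 0 ≤ x) (hx1 : x < 1) (k M : ℕ) :
    countdownMass x 0 k M = x ^ (k * M) := by
  have := qPochhammer_ne_zero hx0 hx1 k
  have := qPochhammer_ne_zero hx0 hx1 M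
  unfold countdownMass
  simp only [zero_add, qPochhammer_zero, one_mul]
  field_simp

lemma countdownMass_succ_zero (hx0 : 0 ≤ x) (hx1 : x < 1) (b k : ℕ) :
    countdownMass x (b + 1) k 0 = (1 - x ^ (b + k + 1)) * countdownMass x b k 0 := by
  have := qPochhammer_ne_zero hx0 hx1 b
  have := qPochhammer_ne_zero hx0 hx1 k
  have := qPochhammer_ne_zero hx0 hx1 (b + 1)
  simp only [countdownMass, mul_zero, pow_zero, add_zero, qPochhammer_zero, mul_one, one_mul]
  rw [Nat.add_right_comm, qPochhammer_succ x (b + k)]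
  field_simp

lemma countdownMass_succ_succ (hx0 : 0 ≤ x) (hx1 : x < 1) (b k M : ℕ) :
    countdownMass x (b + 1) k (M + 1) =
      (1 - x ^ (b + k + 1)) * countdownMass x b k (M + 1) +
        x ^ (b + k + 1) * countdownMass x (b + 1) k M := by
  have := qPochhammer_ne_zero hx0 hx1 b
  have := qPochhammer_ne_zero hx0 hx1 k
  have := qPochhammer_ne_zero hx0 hx1 M
  have := (one_sub_pow_succ_pos hx0 hx1 b).ne'
  have := (one_sub_pow_succ_pos hx0 hx1 M).ne'
  unfold countdownMass
  rw [show b + 1 + (M + 1) = b + M + 1 + 1 by ring, show b + (M + 1) = b + M + 1 by ring,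
    show b + 1 + M = b + M + 1 by ring, show b + 1 + k = b + k + 1 by ring,
    qPochhammer_succ x (b + M + 1), qPochhammer_succ x (b + k),
    qPochhammer_succ x b, qPochhammer_succ x M]
  field_simp
  ring

lemma countdownMass_succ_left (hx0 : 0 ≤ x) (hx1 : x < 1) (b k M : ℕ) :
    countdownMass x (b + 1) k M = ∑ z ∈ range (M + 1),
      x ^ ((b + k + 1) * z) * (1 - x ^ (b + k + 1)) * countdownMass x b k (M - z) := by
  induction M with
  | zero => simp [countdownMass_succ_zero hx0 hx1]
  | succ M ih =>
    rw [sum_range_succ', countdownMass_succ_succ hx0 hx1, ih, mul_sum]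
    simp only [pow_succ, Nat.mul_succ, pow_add, Nat.succ_sub_succ, mul_zero, pow_zero, one_mul,
      Nat.sub_zero]
    rw [add_comm]
    congr 1
    refine sum_congr rfl fun z _ ↦ ?_
    ring

end Algebra

section Countdown

variable {Ω : Type*} (Z : ℕ → Ω → ℕ) (n : ℕ) (t : ℤ) (ω : Ω)

lemma countdown_le_iff (k : ℕ) :
    countdown Z n t ω ≤ k ↔ ((∑ i ∈ Icc (k + 1) n, Z i ω : ℕ) : ℤ) ≤ t + k := by
  set S := {k : ℕ | ((∑ i ∈ Icc (k + 1) n, Z i ω : ℕ) : ℤ) ≤ t + k}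
  have hS : ∀ {j k}, j ≤ k → j ∈ S → k ∈ S := fun {j k} hjk hj ↦ by
    have : ∑ i ∈ Icc (k + 1) n, Z i ω ≤ ∑ i ∈ Icc (j + 1) n, Z i ω :=
      sum_le_sum_of_subset (Icc_subset_Icc_left (by omega))
    simp only [S, Set.mem_ofPred_eq] at hj ⊢
    omega
  have hne : S.Nonempty := ⟨n + t.natAbs, by
    simp only [S, Set.mem_ofPred_eq, Icc_eq_empty_of_lt (by omega : n < n + t.natAbs + 1),
      sum_empty, Nat.cast_zero]
    omega⟩
  exact ⟨fun h ↦ hS h (Nat.sInf_mem hne), fun h ↦ Nat.sInf_le h⟩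

lemma countdown_add_nonneg : 0 ≤ t + countdown Z n t ω :=
  le_trans (Nat.cast_nonneg _) ((countdown_le_iff Z n t ω _).1 le_rfl)

lemma countdown_le (ht : -(n : ℤ) ≤ t) : countdown Z n t ω ≤ n := by
  rw [countdown_le_iff]
  simp only [Icc_eq_empty_of_lt (Nat.lt_succ_self n), sum_empty, Nat.cast_zero]
  omega

lemma countdown_succ (ht : -((n : ℤ) + 1) ≤ t) :
    countdown Z (n + 1) t ω = min (n + 1) (countdown Z n (t - Z (n + 1) ω) ω) := by
  refine eq_of_forall_ge_iff fun k ↦ ?_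
  rw [min_le_iff, countdown_le_iff, countdown_le_iff]
  rcases le_or_gt (n + 1) k with hk | hk
  · simp only [Icc_eq_empty_of_lt (Nat.lt_succ_of_le hk), sum_empty, Nat.cast_zero]
    omega
  · rw [sum_Icc_succ_top (by omega)]
    push_cast
    omega

lemma countdown_ne_of_lt (ht : -(n : ℤ) ≤ t) {k : ℕ} (hk : n < k) : countdown Z n t ω ≠ k :=
  ((countdown_le Z n t ω ht).trans_lt hk).ne

lemma countdown_succ_eq_self_iff (ht : -((n : ℤ) + 1) ≤ t) :
    countdown Z (n + 1) t ω = n + 1 ↔ t + n < Z (n + 1) ω := by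
  have := countdown_le Z (n + 1) t ω (by push_cast; omega)
  have key := countdown_le_iff Z (n + 1) t ω n
  rw [Icc_self, sum_singleton] at key
  omega

lemma countdown_add_succ_eq_iff {b k : ℕ} (M : ℕ) :
    countdown Z (b + 1 + k) (M - k) ω = k ↔
      ∃ z < M + 1, Z (b + k + 1) ω = z ∧ countdown Z (b + k) ((M - z : ℕ) - k) ω = k := by
  rw [Nat.add_right_comm, countdown_succ Z _ _ ω (by omega)]
  have := countdown_add_nonneg Z (b + k) (M - k - Z (b + k + 1) ω) ω
  constructor
  · intro h
    refine ⟨Z (b + k + 1) ω, by omega, rfl, ?_⟩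
    rw [Nat.cast_sub (by omega), sub_right_comm]
    omega
  · rintro ⟨z, hz, rfl, h⟩
    rw [Nat.cast_sub (by omega), sub_right_comm] at h
    omega

lemma countdown_congr {Ω' : Type*} (Z' : ℕ → Ω' → ℕ) (ω' : Ω')
    (h : ∀ i ∈ Icc 1 n, Z i ω = Z' i ω') : countdown Z n t ω = countdown Z' n t ω' := by
  unfold countdown
  congr 2 with k
  rw [sum_congr rfl fun i hi ↦ h i (Icc_subset_Icc_left (by omega) hi)]

lemma countdown_eq_comp :
    countdown Z n t = (fun v : Icc 1 n → ℕ ↦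
        countdown (fun i v ↦ if h : i ∈ Icc 1 n then v ⟨i, h⟩ else 0) n t v) ∘
      fun ω (i : Icc 1 n) ↦ Z i ω := by
  funext ω
  rw [Function.comp_apply]
  exact countdown_congr Z n t ω _ (fun i : Icc 1 n ↦ Z i ω) fun i hi ↦ by simp only [hi, dite_true]

end Countdown

section Probability

variable {Ω : Type*} [MeasurableSpace Ω] {P : Measure Ω} {Z : ℕ → Ω → ℕ}

lemma measurable_countdown (hmeas : ∀ i, Measurable (Z i)) (n : ℕ) (s : ℤ) :
    Measurable (countdown Z n s) := by
  rw [countdown_eq_comp]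
  exact (measurable_of_countable _).comp (measurable_pi_lambda _ fun i ↦ hmeas i)

lemma indepFun_countdown (hmeas : ∀ i, Measurable (Z i)) (hindep : iIndepFun Z P)
    (n : ℕ) (s : ℤ) : IndepFun (Z (n + 1)) (countdown Z n s) P := by
  have h := hindep.indepFun_finset {n + 1} (Icc 1 n) (by simp) hmeas
  rw [countdown_eq_comp]
  exact h.comp (measurable_of_countable fun v : ({n + 1} : Finset ℕ) → ℕ ↦ v ⟨n + 1, by simp⟩)
    (measurable_of_countable _)

variable [IsProbabilityMeasure P] {x : ℝ}

lemma measure_eq_of_tail_eq_pow (hx0 : 0 ≤ x) (i : ℕ) (hmeas : Measurable (Z i))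
    (hgeom : ∀ k : ℕ, P {ω | k ≤ Z i ω} = ENNReal.ofReal (x ^ (i * k))) (z : ℕ) :
    P {ω | Z i ω = z} = ENNReal.ofReal (x ^ (i * z) * (1 - x ^ i)) := by
  have hdiff : {ω | Z i ω = z} = {ω | z ≤ Z i ω} \ {ω | z + 1 ≤ Z i ω} := by
    ext ω
    simp only [Set.mem_ofPred_eq, Set.mem_sdiff]
    omega
  have hmeas' : MeasurableSet {ω | z + 1 ≤ Z i ω} := hmeas measurableSet_Ici
  rw [hdiff, measure_sdiff (Set.ofPred_subset_ofPred.2 fun ω h ↦ by omega)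
    hmeas'.nullMeasurableSet (measure_ne_top P _), hgeom, hgeom,
    ← ENNReal.ofReal_sub _ (by positivity), Nat.mul_succ, pow_add]
  ring_nf

variable (hx0 : 0 ≤ x) (hx1 : x < 1) (hmeas : ∀ i, Measurable (Z i)) (hindep : iIndepFun Z P)
  (hgeom : ∀ i, 1 ≤ i → ∀ k : ℕ, P {ω | k ≤ Z i ω} = ENNReal.ofReal (x ^ (i * k)))
include hx0 hx1 hmeas hindep hgeom

lemma measure_countdown_eq_countdownMass (b k M : ℕ) :
    P {ω | countdown Z (b + k) (M - k) ω = k} = ENNReal.ofReal (countdownMass x b k M) := by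
  induction b generalizing M with
  | zero =>
    rw [countdownMass_zero_left hx0 hx1]
    rcases k with _ | j
    · have hall : {ω | countdown Z (0 + 0) (M - (0 : ℕ)) ω = 0} = Set.univ :=
        Set.eq_univ_of_forall fun ω ↦ Nat.le_zero.1 (countdown_le Z 0 _ ω (by omega))
      simp only [hall, measure_univ, zero_mul, pow_zero, ENNReal.ofReal_one]
    · have hset : {ω | countdown Z (0 + (j + 1)) (M - (j + 1 : ℕ)) ω = j + 1} =
          {ω | M ≤ Z (j + 1) ω} := by
        ext ω
        rw [Set.mem_ofPred_eq, zero_add, countdown_succ_eq_self_iff Z j _ ω (by omega)]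
        simp only [Set.mem_ofPred_eq]
        omega
      rw [hset, hgeom _ (by omega), Nat.mul_comm]
  | succ b ih =>
    have hsplit : {ω | countdown Z (b + 1 + k) (M - k) ω = k} = ⋃ z ∈ range (M + 1),
        {ω | Z (b + k + 1) ω = z} ∩ {ω | countdown Z (b + k) ((M - z : ℕ) - k) ω = k} := by
      ext ω
      simp only [Set.mem_ofPred_eq, Set.mem_iUnion, Set.mem_inter_iff, mem_range, exists_prop]
      exact countdown_add_succ_eq_iff Z ω M
    have hdisj : (range (M + 1) : Set ℕ).PairwiseDisjoint fun z ↦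
        {ω | Z (b + k + 1) ω = z} ∩ {ω | countdown Z (b + k) ((M - z : ℕ) - k) ω = k} :=
      fun z _ z' _ hzz' ↦ Set.disjoint_left.2 fun ω h h' ↦ hzz' (h.1.symm.trans h'.1)
    rw [hsplit, measure_biUnion_finset hdisj fun z _ ↦
      (hmeas _ (measurableSet_singleton z)).inter
        (measurable_countdown hmeas _ _ (measurableSet_singleton k))]
    have hterm : ∀ z ∈ range (M + 1),
        P ({ω | Z (b + k + 1) ω = z} ∩ {ω | countdown Z (b + k) ((M - z : ℕ) - k) ω = k}) =
          ENNReal.ofReal (x ^ ((b + k + 1) * z) * (1 - x ^ (b + k + 1)) *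
            countdownMass x b k (M - z)) := fun z _ ↦ by
      have hprod := (indepFun_countdown hmeas hindep (b + k) ((M - z : ℕ) - k))
        |>.measure_inter_preimage_eq_mul {z} {k} (measurableSet_singleton z)
          (measurableSet_singleton k)
      simp only [Set.preimage, Set.mem_singleton_iff] at hprod
      rw [hprod, ENNReal.ofReal_mul
        (mul_nonneg (pow_nonneg hx0 _) (one_sub_pow_succ_pos hx0 hx1 _).le)]
      exact congr_arg₂ _ (measure_eq_of_tail_eq_pow hx0 _ (hmeas _) (hgeom _ (by omega)) z) (ih _)
    rw [sum_congr rfl hterm, ← ENNReal.ofReal_sum_of_nonneg fun z _ ↦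
      mul_nonneg (mul_nonneg (pow_nonneg hx0 _) (one_sub_pow_succ_pos hx0 hx1 _).le)
        (countdownMass_nonneg hx0 hx1 _ _ _), countdownMass_succ_left hx0 hx1]

end Probability

theorem countdown_reflection {Ω : Type*} [MeasurableSpace Ω] (P : Measure Ω)
    [IsProbabilityMeasure P] (x : ℝ) (hx0 : 0 < x) (hx1 : x < 1)
    (Z : ℕ → Ω → ℕ) (hmeas : ∀ i, Measurable (Z i))
    (hindep : iIndepFun Z P)
    (hgeom : ∀ i, 1 ≤ i → ∀ k : ℕ, P {ω | k ≤ Z i ω} = ENNReal.ofReal (x ^ (i * k)))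
    (n : ℕ) (t : ℤ) (ht : -(n : ℤ) ≤ t) (k : ℕ) (hk : 0 ≤ t + k) :
    P {ω | countdown Z n t ω = k}
      = P {ω | (countdown Z ((n : ℤ) + t).toNat (-t) ω : ℤ) = t + k} := by
  rcases lt_or_ge n k with hnk | hkn
  · have hL : ∀ ω, countdown Z n t ω ≠ k := fun ω ↦ countdown_ne_of_lt Z n t ω ht hnk
    have hR : ∀ ω, (countdown Z ((n : ℤ) + t).toNat (-t) ω : ℤ) ≠ t + k := fun ω ↦ by
      have := countdown_le Z ((n : ℤ) + t).toNat (-t) ω (by omega)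
      omega
    simp only [hL, hR, Set.ofPred_false]
  obtain ⟨b, rfl⟩ := Nat.exists_eq_add_of_le' hkn
  obtain ⟨M, hM⟩ := Int.eq_ofNat_of_zero_le hk
  obtain rfl : t = M - k := by omega
  have hn' : (((b + k : ℕ) : ℤ) + (M - k)).toNat = b + M := by omega
  rw [hn', neg_sub, sub_add_cancel]
  simp only [Nat.cast_inj]
  rw [measure_countdown_eq_countdownMass hx0.le hx1 hmeas hindep hgeom,
    measure_countdown_eq_countdownMass hx0.le hx1 hmeas hindep hgeom, countdownMass_comm]
end
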